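/- arXiv:1806.07263 — 4 statements merged into one kernel-verified Lean document; each statement's English description precedes it below -/
import Mathlib

section
/- For any cube Q ⊂ ℝⁿ, any β ≥ 0, any ε ∈ (0,1], and any locally integrable f, the Luxemburg norm satisfies ‖f‖_{L(log L)^β, Q} ≤ C(β) ε^{−β} (|Q|^{-1} ∫_Q |f|^{1+ε})^{1/(1+ε)}. -/
open MeasureTheory Set
open scoped ENNReal

/-- The Luxemburg norm `‖f‖_{L(log L)^β, Q}` on a set `Q ⊂ ℝⁿ`, i.e. the infimum of
those `λ > 0` for which `|Q|⁻¹ ∫_Q (|f|/λ) log^β(e + |f|/λ) ≤ 1` (value `∞` if no such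
`λ` exists). -/
noncomputable def luxNorm (n : ℕ) (β : ℝ) (Q : Set (Fin n → ℝ))
    (f : (Fin n → ℝ) → ℝ) : ℝ≥0∞ :=
  ⨅ (lam : ℝ) (_ : 0 < lam ∧
      ∫⁻ y in Q, ENNReal.ofReal
          ((|f y| / lam) * (Real.log (Real.exp 1 + |f y| / lam)) ^ β)
        ≤ volume Q),
    ENNReal.ofReal lam

/-!
For `t ≥ 0`, `log x ≤ x ^ p / p` gives `t log^β(e + t) ≤ C(β) ε^{-β} (t + t^{1+ε})`,
and the linear term splits as `t ≤ s + s^{-ε} t^{1+ε}`. With `t = |f|/λ`,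
`λ = 3 C(β) ε^{-β} a` and `s = a/λ`, where `a^{1+ε}` bounds the `L^{1+ε}` average of `f`,
the Orlicz average is at most `1/3 + 2/3 = 1`. Only pointwise inequalities enter, so `f`
need not be measurable.
-/

open Real

noncomputable def llogConst (β : ℝ) : ℝ := exp 1 * (1 + β) ^ β

lemma one_le_llogConst {β : ℝ} (hβ : 0 ≤ β) : 1 ≤ llogConst β :=
  one_le_mul_of_one_le_of_one_le (one_le_exp zero_le_one) (one_le_rpow (by linarith) hβ)

section Pointwise

variable {β ε s t : ℝ}

lemma log_exp_add_rpow_le (hβ : 0 ≤ β) (hε : 0 < ε) (hε1 : ε ≤ 1) (ht : 0 ≤ t) :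
    log (exp 1 + t) ^ β ≤ llogConst β * ε ^ (-β) * (1 + t ^ ε) := by
  have he : 1 ≤ exp 1 := one_le_exp zero_le_one
  set x := exp 1 + t
  have hx : 1 ≤ x := by linarith
  -- `log x ≤ x ^ p / p` with `p = ε / (1 + β)` keeps the exponent `p * β` of `x` below `ε`.
  set p := ε / (1 + β)
  have hp : 0 < p := by positivity
  have hlog : log x ^ β ≤ (x ^ p / p) ^ β :=
    rpow_le_rpow (log_nonneg hx) (log_le_rpow_div (by linarith) hp) hβ
  have hpow : (x ^ p / p) ^ β = (1 + β) ^ β * ε ^ (-β) * x ^ (p * β) := by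
    rw [div_rpow (by positivity) hp.le, ← rpow_mul (by linarith), div_rpow hε.le (by linarith),
      rpow_neg hε.le]
    field_simp
  have hexp : x ^ (p * β) ≤ x ^ ε := by
    refine rpow_le_rpow_of_exponent_le hx ?_
    rw [div_mul_eq_mul_div, div_le_iff₀ (by linarith)]
    nlinarith
  have hsub : x ^ ε ≤ exp 1 * (1 + t ^ ε) :=
    calc x ^ ε ≤ exp 1 ^ ε + t ^ ε := rpow_add_le_add_rpow (exp_pos 1).le ht hε.le hε1
      _ ≤ exp 1 + t ^ ε := by gcongr; exact rpow_le_self_of_one_le he hε1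
      _ ≤ exp 1 * (1 + t ^ ε) := by nlinarith [rpow_nonneg ht ε]
  calc log x ^ β ≤ (1 + β) ^ β * ε ^ (-β) * x ^ (p * β) := hlog.trans_eq hpow
    _ ≤ (1 + β) ^ β * ε ^ (-β) * (exp 1 * (1 + t ^ ε)) := by gcongr; exact hexp.trans hsub
    _ = llogConst β * ε ^ (-β) * (1 + t ^ ε) := by unfold llogConst; ring

lemma mul_log_exp_add_rpow_le (hβ : 0 ≤ β) (hε : 0 < ε) (hε1 : ε ≤ 1) (ht : 0 ≤ t) :
    t * log (exp 1 + t) ^ β ≤ llogConst β * ε ^ (-β) * (t + t ^ (1 + ε)) := by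
  rw [rpow_add' ht (by linarith), rpow_one]
  calc t * log (exp 1 + t) ^ β ≤ t * (llogConst β * ε ^ (-β) * (1 + t ^ ε)) :=
        mul_le_mul_of_nonneg_left (log_exp_add_rpow_le hβ hε hε1 ht) ht
    _ = llogConst β * ε ^ (-β) * (t + t * t ^ ε) := by ring

lemma le_add_rpow_neg_mul_rpow (hs : 0 < s) (ht : 0 ≤ t) (hε : 0 ≤ ε) :
    t ≤ s + s ^ (-ε) * t ^ (1 + ε) := by
  rcases le_or_gt t s with hts | hst
  · have : 0 ≤ s ^ (-ε) * t ^ (1 + ε) := by positivity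
    linarith
  · have hratio : 1 ≤ (t / s) ^ ε := one_le_rpow ((one_le_div hs).2 hst.le) hε
    have hscale : s ^ (-ε) * t ^ (1 + ε) = (t / s) ^ ε * t := by
      rw [rpow_add' ht (by linarith), rpow_one, div_rpow ht hs.le, rpow_neg hs.le]
      ring
    nlinarith

lemma mul_log_exp_add_rpow_le_add (hβ : 0 ≤ β) (hε : 0 < ε) (hε1 : ε ≤ 1) (hs : 0 < s)
    (hs1 : s ≤ 1) (ht : 0 ≤ t) :
    t * log (exp 1 + t) ^ β ≤ llogConst β * ε ^ (-β) * (s + 2 * s ^ (-ε) * t ^ (1 + ε)) := by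
  refine (mul_log_exp_add_rpow_le hβ hε hε1 ht).trans ?_
  have hM : 0 ≤ llogConst β * ε ^ (-β) :=
    mul_nonneg (zero_le_one.trans (one_le_llogConst hβ)) (rpow_nonneg hε.le _)
  have hs_inv : 1 ≤ s ^ (-ε) := one_le_rpow_of_pos_of_le_one_of_nonpos hs hs1 (by linarith)
  have hyoung := le_add_rpow_neg_mul_rpow hs ht hε.le
  have : t ^ (1 + ε) ≤ s ^ (-ε) * t ^ (1 + ε) :=
    le_mul_of_one_le_left (rpow_nonneg ht _) hs_inv
  exact mul_le_mul_of_nonneg_left (by linarith) hM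

end Pointwise

lemma setLIntegral_mul_log_exp_add_le {α : Type*} [MeasurableSpace α] (μ : Measure α)
    (Q : Set α) (f : α → ℝ) {β ε s lam : ℝ} (hβ : 0 ≤ β) (hε : 0 < ε) (hε1 : ε ≤ 1)
    (hs : 0 < s) (hs1 : s ≤ 1) (hlam : 0 < lam) :
    ∫⁻ y in Q, ENNReal.ofReal ((|f y| / lam) * log (exp 1 + |f y| / lam) ^ β) ∂μ ≤
      ENNReal.ofReal (llogConst β * ε ^ (-β) * s) * μ Q +
        ENNReal.ofReal (llogConst β * ε ^ (-β) * (2 * s ^ (-ε) * lam ^ (-(1 + ε)))) *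
          ∫⁻ y in Q, ENNReal.ofReal (|f y| ^ (1 + ε)) ∂μ := by
  have hM : 0 ≤ llogConst β * ε ^ (-β) :=
    mul_nonneg (zero_le_one.trans (one_le_llogConst hβ)) (rpow_nonneg hε.le _)
  calc _ ≤ ∫⁻ y in Q, (ENNReal.ofReal (llogConst β * ε ^ (-β) * s) +
          ENNReal.ofReal (llogConst β * ε ^ (-β) * (2 * s ^ (-ε) * lam ^ (-(1 + ε)))) *
            ENNReal.ofReal (|f y| ^ (1 + ε))) ∂μ := by
        refine lintegral_mono fun y => ?_
        rw [← ENNReal.ofReal_mul (mul_nonneg hM (by positivity)),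
          ← ENNReal.ofReal_add (mul_nonneg hM hs.le) (by positivity)]
        refine ENNReal.ofReal_le_ofReal
          ((mul_log_exp_add_rpow_le_add hβ hε hε1 hs hs1 (by positivity)).trans_eq ?_)
        rw [div_rpow (abs_nonneg _) hlam.le, rpow_neg hlam.le]
        ring
    _ = _ := by
        rw [lintegral_add_left measurable_const, setLIntegral_const,
          lintegral_const_mul' _ _ ENNReal.ofReal_ne_top]

lemma luxNorm_le_of_setLIntegral_rpow_le {n : ℕ} {β ε a : ℝ} (hβ : 0 ≤ β) (hε : 0 < ε)
    (hε1 : ε ≤ 1) (ha : 0 < a) {Q : Set (Fin n → ℝ)} {f : (Fin n → ℝ) → ℝ}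
    (hf : ∫⁻ y in Q, ENNReal.ofReal (|f y| ^ (1 + ε)) ≤
      volume Q * ENNReal.ofReal (a ^ (1 + ε))) :
    luxNorm n β Q f ≤ ENNReal.ofReal (3 * (llogConst β * ε ^ (-β)) * a) := by
  set M := llogConst β * ε ^ (-β)
  have hM : 1 ≤ M := one_le_mul_of_one_le_of_one_le (one_le_llogConst hβ)
    (one_le_rpow_of_pos_of_le_one_of_nonpos hε hε1 (by linarith))
  set lam := 3 * M * a
  have hlam : 0 < lam := by positivity
  set s := (3 * M)⁻¹
  have hs : 0 < s := by positivity
  have hMs : M * s = 1 / 3 := by simp only [s]; field_simp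
  have hscale : s ^ (-ε) * lam ^ (-(1 + ε)) * a ^ (1 + ε) = s := by
    have hs_eq : a / lam = s := by simp only [lam, s]; field_simp
    rw [mul_assoc, rpow_neg hlam.le, ← div_eq_inv_mul, ← div_rpow ha.le hlam.le, hs_eq,
      ← rpow_add hs, neg_add_eq_sub, add_sub_cancel_right, rpow_one]
  have hcond : ∫⁻ y in Q, ENNReal.ofReal ((|f y| / lam) * log (exp 1 + |f y| / lam) ^ β) ≤
      volume Q := calc
    _ ≤ ENNReal.ofReal (M * s) * volume Q +
        ENNReal.ofReal (M * (2 * s ^ (-ε) * lam ^ (-(1 + ε)))) *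
          (volume Q * ENNReal.ofReal (a ^ (1 + ε))) :=
      (setLIntegral_mul_log_exp_add_le volume Q f hβ hε hε1 hs
        (inv_le_one_of_one_le₀ (by linarith)) hlam).trans (by gcongr)
    _ = volume Q *
        ENNReal.ofReal (M * s + M * (2 * s ^ (-ε) * lam ^ (-(1 + ε))) * a ^ (1 + ε)) := by
      have hM0 : 0 ≤ M := by linarith
      rw [ENNReal.ofReal_add (mul_nonneg hM0 hs.le) (by positivity),
        ENNReal.ofReal_mul (q := a ^ (1 + ε)) (mul_nonneg hM0 (by positivity))]
      ring
    _ = volume Q := by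
      rw [show M * s + M * (2 * s ^ (-ε) * lam ^ (-(1 + ε))) * a ^ (1 + ε) = 1 by
        linear_combination 2 * M * hscale + 3 * hMs, ENNReal.ofReal_one, mul_one]
  unfold luxNorm
  exact iInf₂_le lam ⟨hlam, hcond⟩

/-- `‖f‖_{L(log L)^β, Q} ≤ C(β) ε^{-β} (|Q|⁻¹ ∫_Q |f|^{1+ε})^{1/(1+ε)}`
for all cubes `Q`, all `ε ∈ (0,1]` and all `f`. -/
theorem stmt_5 (β : ℝ) (hβ : 0 ≤ β) :
    ∃ C : ℝ, 0 < C ∧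
      ∀ (n : ℕ) (ε : ℝ), ε ∈ Set.Ioc (0 : ℝ) 1 →
      ∀ (z : Fin n → ℝ) (r : ℝ), 0 < r →
      ∀ f : (Fin n → ℝ) → ℝ,
        luxNorm n β (Metric.closedBall z r) f
          ≤ ENNReal.ofReal (C * ε ^ (-β)) *
            (((volume (Metric.closedBall z r))⁻¹
                * ∫⁻ y in Metric.closedBall z r, ENNReal.ofReal (|f y| ^ (1 + ε)))
              ^ (1 / (1 + ε))) := by
  have hK := one_le_llogConst hβ
  refine ⟨3 * llogConst β, by linarith, ?_⟩
  rintro n ε ⟨hε, hε1⟩ z r hr f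
  have hV0 : volume (Metric.closedBall z r) ≠ 0 :=
    (Metric.measure_closedBall_pos volume z hr).ne'
  have hc0 : ENNReal.ofReal (3 * llogConst β * ε ^ (-β)) ≠ 0 :=
    (ENNReal.ofReal_pos.2 (mul_pos (by linarith) (rpow_pos_of_pos hε _))).ne'
  refine ENNReal.le_mul_of_forall_lt (.inl hc0) (.inl ENNReal.ofReal_ne_top)
    fun c hc x hx => le_trans ?_ (mul_le_mul_left hc.le x)
  rcases eq_or_ne x ∞ with rfl | hx_top
  · rw [ENNReal.mul_top hc0]
    exact le_top
  have hx_pos : 0 < x.toReal := ENNReal.toReal_pos (pos_of_gt hx).ne' hx_top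
  rw [gt_iff_lt, one_div, ENNReal.rpow_inv_lt_iff (by linarith)] at hx
  have hf : ∫⁻ y in Metric.closedBall z r, ENNReal.ofReal (|f y| ^ (1 + ε)) ≤
      volume (Metric.closedBall z r) * ENNReal.ofReal (x.toReal ^ (1 + ε)) := by
    rw [← ENNReal.ofReal_rpow_of_nonneg ENNReal.toReal_nonneg (by linarith),
      ENNReal.ofReal_toReal hx_top, ← ENNReal.inv_mul_le_iff hV0 measure_closedBall_lt_top.ne]
    exact hx.le
  calc luxNorm n β (Metric.closedBall z r) f
      ≤ ENNReal.ofReal (3 * (llogConst β * ε ^ (-β)) * x.toReal) :=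
        luxNorm_le_of_setLIntegral_rpow_le hβ hε hε1 hx_pos hf
    _ = ENNReal.ofReal (3 * llogConst β * ε ^ (-β)) * x := by
        rw [← mul_assoc, ENNReal.ofReal_mul (by positivity), ENNReal.ofReal_toReal hx_top]
end

section
/- Let R > 1 and Ω ⊊ ℝⁿ a nonempty open set. Then Ω can be decomposed as Ω = ⋃_j Q_j where {Q_j} is a countable family of cubes with pairwise disjoint interiors such that (i) 5R ≤ dist(Q_j, ℝⁿ\Ω)/diam(Q_j) ≤ 15R for every j, and (ii) ∑_j χ_{RQ_j}(x) ≤ C(n,R) χ_Ω(x) for all x, i.e. the dilated cubes RQ_j have bounded overlap and stay inside Ω. -/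
open MeasureTheory Set Metric
open scoped ENNReal

namespace Stmt9

variable {n : ℕ}

noncomputable def ctr (k : ℤ) (z : Fin n → ℤ) : Fin n → ℝ :=
  fun i => (z i : ℝ) * 2 ^ k + 2 ^ k / 2

noncomputable def rad (k : ℤ) : ℝ := 2 ^ k / 2

def cube (k : ℤ) (z : Fin n → ℤ) : Set (Fin n → ℝ) := Metric.closedBall (ctr k z) (rad k)

lemma two_zpow_pos (k : ℤ) : (0:ℝ) < 2 ^ k := zpow_pos (by norm_num) k

lemma rad_pos (k : ℤ) : 0 < rad k := by
  have := two_zpow_pos k; unfold rad; linarith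

lemma cube_eq (k : ℤ) (z : Fin n → ℤ) :
    cube k z = Set.pi univ fun i => Icc ((z i : ℝ) * 2 ^ k) (((z i : ℝ) + 1) * 2 ^ k) := by
  rw [cube, closedBall_pi _ (rad_pos k).le]
  refine Set.pi_congr rfl fun i _ => ?_
  rw [Real.closedBall_eq_Icc]
  have e1 : ctr k z i - rad k = (z i : ℝ) * 2 ^ k := by unfold ctr rad; ring
  have e2 : ctr k z i + rad k = ((z i : ℝ) + 1) * 2 ^ k := by unfold ctr rad; ring
  rw [e1, e2]

lemma interior_cube (k : ℤ) (z : Fin n → ℤ) :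
    interior (cube k z) = Set.pi univ fun i => Ioo ((z i : ℝ) * 2 ^ k) (((z i : ℝ) + 1) * 2 ^ k) := by
  rw [cube, interior_closedBall _ (rad_pos k).ne', ball_pi _ (rad_pos k)]
  refine Set.pi_congr rfl fun i _ => ?_
  rw [Real.ball_eq_Ioo]
  have e1 : ctr k z i - rad k = (z i : ℝ) * 2 ^ k := by unfold ctr rad; ring
  have e2 : ctr k z i + rad k = ((z i : ℝ) + 1) * 2 ^ k := by unfold ctr rad; ring
  rw [e1, e2]

lemma dyadic_interval {k k' : ℤ} (hk : k ≤ k') (a b : ℤ) :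
    Icc ((a:ℝ) * 2 ^ k) (((a:ℝ)+1) * 2 ^ k) ⊆ Icc ((b:ℝ) * 2 ^ k') (((b:ℝ)+1) * 2 ^ k') ∨
    Disjoint (Ioo ((a:ℝ) * 2 ^ k) (((a:ℝ)+1) * 2 ^ k))
      (Ioo ((b:ℝ) * 2 ^ k') (((b:ℝ)+1) * 2 ^ k')) := by
  set m : ℕ := (k' - k).toNat with hm
  have hmk : k' = k + (m : ℤ) := by omega
  set M : ℤ := 2 ^ m with hM
  have h2 : (2:ℝ) ^ k' = (M : ℝ) * 2 ^ k := by
    rw [hmk, zpow_add₀ (two_ne_zero), hM]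
    push_cast
    rw [zpow_natCast]
    ring
  have ht := two_zpow_pos k
  have key : ∀ c c' : ℤ, c ≤ c' → (c:ℝ) * 2 ^ k ≤ (c':ℝ) * 2 ^ k := by
    intro c c' h
    have : (c:ℝ) ≤ (c':ℝ) := by exact_mod_cast h
    nlinarith
  rcases le_or_gt (a + 1) (b * M) with h1 | h1
  · right
    rw [Set.disjoint_left]
    intro x hx hx'
    have e1 : ((a:ℝ)+1) * 2 ^ k ≤ (b:ℝ) * 2 ^ k' := by
      rw [h2, ← mul_assoc]
      have := key (a+1) (b*M) h1
      push_cast at this ⊢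
      linarith
    exact absurd (hx.2.trans_le (e1.trans hx'.1.le)) (lt_irrefl _)
  rcases le_or_gt ((b+1) * M) a with h2' | h2'
  · right
    rw [Set.disjoint_left]
    intro x hx hx'
    have e1 : ((b:ℝ)+1) * 2 ^ k' ≤ (a:ℝ) * 2 ^ k := by
      rw [h2, ← mul_assoc]
      have := key ((b+1)*M) a h2'
      push_cast at this ⊢
      linarith
    exact absurd (hx'.2.trans_le (e1.trans hx.1.le)) (lt_irrefl _)
  · left
    have l1 : b * M ≤ a := by omega
    have l2 : a + 1 ≤ (b + 1) * M := by omega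
    apply Set.Icc_subset_Icc
    · rw [h2, ← mul_assoc]
      have := key (b*M) a l1
      push_cast at this ⊢
      linarith
    · rw [h2, ← mul_assoc]
      have := key (a+1) ((b+1)*M) l2
      push_cast at this ⊢
      linarith

lemma cube_nesting {k k' : ℤ} (hk : k ≤ k') (z z' : Fin n → ℤ) :
    cube k z ⊆ cube k' z' ∨ Disjoint (interior (cube k z)) (interior (cube (n := n) k' z')) := by
  by_cases h : ∀ i, Icc ((z i:ℝ) * 2 ^ k) (((z i:ℝ)+1) * 2 ^ k)
      ⊆ Icc ((z' i:ℝ) * 2 ^ k') (((z' i:ℝ)+1) * 2 ^ k')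
  · left; rw [cube_eq, cube_eq]; exact Set.pi_mono fun i _ => h i
  · right
    push_neg at h
    obtain ⟨i, hi⟩ := h
    have hd := (dyadic_interval hk (z i) (z' i)).resolve_left hi
    rw [interior_cube, interior_cube, Set.disjoint_left]
    intro x hx hx'
    exact (Set.disjoint_left.mp hd) (hx i (mem_univ i)) (hx' i (mem_univ i))

lemma same_level_disjoint {k : ℤ} {z z' : Fin n → ℤ} (h : z ≠ z') :
    Disjoint (interior (cube k z)) (interior (cube (n := n) k z')) := by
  obtain ⟨i, hi⟩ := Function.ne_iff.mp h
  rw [interior_cube, interior_cube, Set.disjoint_left]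
  intro x hx hx'
  have h1 := hx i (mem_univ i)
  have h2 := hx' i (mem_univ i)
  have ht := two_zpow_pos k
  rcases lt_or_gt_of_ne hi with hlt | hlt
  · have : (z i : ℝ) + 1 ≤ (z' i : ℝ) := by exact_mod_cast hlt
    nlinarith [h1.2, h2.1]
  · have : (z' i : ℝ) + 1 ≤ (z i : ℝ) := by exact_mod_cast hlt
    nlinarith [h2.2, h1.1]

lemma cube_subset_parent (k : ℤ) (z : Fin n → ℤ) :
    cube k z ⊆ cube (k+1) (fun i => z i / 2) := by
  rw [cube_eq, cube_eq]
  apply Set.pi_mono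
  intro i _
  have ht := two_zpow_pos k
  have h2 : (2:ℝ)^(k+1) = 2 * 2^k := by rw [zpow_add_one₀ (two_ne_zero)]; ring
  have e1 : 2 * (z i / 2) ≤ z i := by omega
  have e2 : z i + 1 ≤ 2 * (z i / 2) + 2 := by omega
  apply Set.Icc_subset_Icc
  · rw [h2]
    have : ((2 * (z i / 2) : ℤ):ℝ) ≤ ((z i : ℤ) : ℝ) := by exact_mod_cast e1
    push_cast at this
    nlinarith
  · rw [h2]
    have : ((z i + 1 : ℤ):ℝ) ≤ ((2 * (z i / 2) + 2 : ℤ) : ℝ) := by exact_mod_cast e2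
    push_cast at this
    nlinarith

lemma mem_cube_floor (k : ℤ) (x : Fin n → ℝ) :
    x ∈ cube k (fun i => ⌊x i / 2 ^ k⌋) := by
  rw [cube_eq]
  intro i _
  have ht := two_zpow_pos k
  have h1 : (⌊x i / 2 ^ k⌋ : ℝ) ≤ x i / 2 ^ k := Int.floor_le _
  have h2 : x i / 2 ^ k < ⌊x i / 2 ^ k⌋ + 1 := Int.lt_floor_add_one _
  constructor
  · rw [← le_div_iff₀ ht] at *; exact h1
  · rw [← div_le_iff₀ ht]; exact h2.le

lemma floor_succ (k : ℤ) (t : ℝ) : ⌊t / 2 ^ (k+1)⌋ = ⌊t / 2 ^ k⌋ / 2 := by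
  have ht := two_zpow_pos k
  set a := ⌊t / 2 ^ k⌋ with ha
  have h1 : (a:ℝ) * 2 ^ k ≤ t := by
    rw [← le_div_iff₀ ht]; exact Int.floor_le _
  have h2 : t < ((a:ℝ) + 1) * 2 ^ k := by
    have := Int.lt_floor_add_one (t / 2 ^ k)
    rw [div_lt_iff₀ ht] at this
    exact this
  have h2k : (2:ℝ)^(k+1) = 2 * 2^k := by rw [zpow_add_one₀ (two_ne_zero)]; ring
  have e1 : 2 * (a / 2) ≤ a := by omega
  have e2 : a + 1 ≤ 2 * (a / 2) + 2 := by omega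
  rw [Int.floor_eq_iff]
  constructor
  · rw [le_div_iff₀ (by positivity), h2k]
    have : ((2 * (a / 2) : ℤ):ℝ) ≤ ((a : ℤ) : ℝ) := by exact_mod_cast e1
    push_cast at this ⊢
    nlinarith
  · rw [div_lt_iff₀ (by positivity), h2k]
    have : ((a + 1 : ℤ):ℝ) ≤ ((2 * (a / 2) + 2 : ℤ) : ℝ) := by exact_mod_cast e2
    push_cast at this ⊢
    nlinarith

variable (R : ℝ) (Ω : Set (Fin n → ℝ))

def good (k : ℤ) (z : Fin n → ℤ) : Prop :=
  ∀ x ∈ cube k z, ∀ y ∉ Ω, 5 * R * 2 ^ k ≤ dist x y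

def sel (p : ℤ × (Fin n → ℤ)) : Prop :=
  good R Ω p.1 p.2 ∧ ¬ good R Ω (p.1 + 1) (fun i => p.2 i / 2)

variable {R Ω}

lemma good_of_subset (hR : 0 < R) {k k' : ℤ} {z z' : Fin n → ℤ} (hk : k ≤ k')
    (hsub : cube k z ⊆ cube (n := n) k' z') (h : good R Ω k' z') : good R Ω k z := by
  intro x hx y hy
  have h1 := h x (hsub hx) y hy
  have h2 : (2:ℝ) ^ k ≤ 2 ^ k' := zpow_le_zpow_right₀ one_le_two hk
  nlinarith

lemma sel_disjoint_aux (hR : 0 < R) {p q : ℤ × (Fin n → ℤ)} (hp : sel R Ω p) (hq : sel R Ω q)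
    (hne : p ≠ q) (hk : p.1 ≤ q.1) :
    Disjoint (interior (cube p.1 p.2)) (interior (cube (n := n) q.1 q.2)) := by
  rcases eq_or_lt_of_le hk with heq | hlt
  · have hz : p.2 ≠ q.2 := by
      intro h
      exact hne (Prod.ext heq h)
    obtain ⟨k1, z1⟩ := p
    obtain ⟨k2, z2⟩ := q
    simp only at heq hz ⊢
    subst heq
    exact same_level_disjoint hz
  · rcases cube_nesting (by omega : p.1 + 1 ≤ q.1) (fun i => p.2 i / 2) q.2 with hsub | hdis
    · exact absurd (good_of_subset hR (by omega) hsub hq.1) hp.2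
    · exact hdis.mono_left (interior_mono (cube_subset_parent _ _))

lemma sel_disjoint (hR : 0 < R) {p q : ℤ × (Fin n → ℤ)} (hp : sel R Ω p) (hq : sel R Ω q)
    (hne : p ≠ q) :
    Disjoint (interior (cube p.1 p.2)) (interior (cube (n := n) q.1 q.2)) := by
  rcases le_total p.1 q.1 with h | h
  · exact sel_disjoint_aux hR hp hq hne h
  · exact (sel_disjoint_aux hR hq hp (Ne.symm hne) h).symm

lemma sel_subset (hR : 0 < R) {p : ℤ × (Fin n → ℤ)} (hp : sel R Ω p) :
    cube p.1 p.2 ⊆ Ω := by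
  intro x hx
  by_contra hxΩ
  have h1 := hp.1 x hx x hxΩ
  rw [dist_self] at h1
  nlinarith [two_zpow_pos p.1]

lemma dist_le_of_mem_cube {k : ℤ} {z : Fin n → ℤ} {x y : Fin n → ℝ}
    (hx : x ∈ cube k z) (hy : y ∈ cube k z) : dist x y ≤ 2 ^ k := by
  rw [cube, Metric.mem_closedBall] at hx hy
  calc dist x y ≤ dist x (ctr k z) + dist (ctr k z) y := dist_triangle _ _ _
    _ ≤ rad k + rad k := add_le_add hx (by rwa [dist_comm])
    _ = 2 ^ k := by unfold rad; ring

lemma cover (hR : 1 < R) (hΩ : IsOpen Ω) (hproper : Ω ≠ univ) {x : Fin n → ℝ} (hx : x ∈ Ω) :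
    ∃ p : ℤ × (Fin n → ℤ), sel R Ω p ∧ x ∈ cube p.1 p.2 := by
  have hcne : Ωᶜ.Nonempty := nonempty_compl.mpr hproper
  have hd : 0 < infDist x Ωᶜ := by
    rw [← (hΩ.isClosed_compl.notMem_iff_infDist_pos hcne)]
    simpa using hx
  set d := infDist x Ωᶜ with hdd
  set P : ℤ → Prop := fun k => good R Ω k (fun i => ⌊x i / 2 ^ k⌋) with hP
  have hbdd : ∃ b : ℤ, ∀ k : ℤ, P k → k ≤ b := by
    obtain ⟨m, hm⟩ := pow_unbounded_of_one_lt d (one_lt_two (α := ℝ))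
    refine ⟨m, fun k hk => ?_⟩
    have h1 : 5 * R * 2 ^ k ≤ d := by
      by_contra hcon
      push_neg at hcon
      obtain ⟨y, hy, hylt⟩ := (Metric.infDist_lt_iff hcne).mp hcon
      exact absurd (hk x (mem_cube_floor k x) y hy) (by rw [not_le]; exact hylt)
    have h2 : (2:ℝ) ^ k ≤ d := by nlinarith [two_zpow_pos k]
    have h3 : (2:ℝ) ^ k < 2 ^ (m : ℤ) := by
      rw [zpow_natCast]; exact h2.trans_lt hm
    exact le_of_lt ((zpow_lt_zpow_iff_right₀ one_lt_two).mp h3)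
  have hinh : ∃ k : ℤ, P k := by
    obtain ⟨m, hm⟩ := pow_unbounded_of_one_lt ((5 * R + 1) / d) (one_lt_two (α := ℝ))
    refine ⟨-(m : ℤ), ?_⟩
    have hpow : (2:ℝ) ^ (-(m:ℤ)) = ((2:ℝ) ^ m)⁻¹ := by
      rw [zpow_neg, zpow_natCast]
    have hpm : (0:ℝ) < 2 ^ m := by positivity
    have hkey : (5 * R + 1) * 2 ^ (-(m:ℤ)) ≤ d := by
      rw [hpow]
      rw [div_lt_iff₀ hd] at hm
      rw [mul_inv_le_iff₀ hpm]
      nlinarith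
    intro x' hx' y hy
    have hdx : d ≤ dist x y := Metric.infDist_le_dist_of_mem hy
    have hxx' : dist x x' ≤ 2 ^ (-(m:ℤ)) := dist_le_of_mem_cube (mem_cube_floor _ x) hx'
    have := dist_triangle x x' y
    have h5 : dist x y ≤ dist x x' + dist x' y := dist_triangle x x' y
    nlinarith [two_zpow_pos (-(m:ℤ))]
  obtain ⟨k, hk, hmax⟩ := Int.exists_greatest_of_bdd hbdd hinh
  refine ⟨(k, fun i => ⌊x i / 2 ^ k⌋), ⟨hk, ?_⟩, mem_cube_floor k x⟩
  intro hgood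
  have heq : (fun i => ⌊x i / 2 ^ k⌋ / 2) = fun i => ⌊x i / 2 ^ (k+1)⌋ := by
    funext i
    rw [floor_succ]
  rw [heq] at hgood
  have := hmax (k+1) hgood
  omega

end Stmt9

open Stmt9 in
/-- Whitney-type decomposition with dilations, Lemma 2.3 of the paper:
any nonempty proper open set `Ω ⊂ ℝⁿ` is a union of countably many cubes `Q_j` with
pairwise disjoint interiors such that `5R ≤ dist(Q_j, Ωᶜ)/diam(Q_j) ≤ 15R`, and the
dilated cubes `RQ_j` have bounded overlap and stay inside `Ω`.  Cubes are closed balls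
of the sup metric on `Fin n → ℝ`, so `diam(Q_j) = 2 r_j` and `R Q_j` is the concentric
ball of radius `R r_j`. -/
theorem stmt_9 (n : ℕ) (hn : 1 ≤ n) (R : ℝ) (hR : 1 < R)
    (Ω : Set (Fin n → ℝ)) (hΩ : IsOpen Ω) (hne : Ω.Nonempty) (hproper : Ω ≠ Set.univ) :
    ∃ (c : ℕ → (Fin n → ℝ)) (r : ℕ → ℝ),
      (∀ j, 0 < r j) ∧
      Ω = ⋃ j, Metric.closedBall (c j) (r j) ∧
      (Pairwise fun i j =>
        Disjoint (interior (Metric.closedBall (c i) (r i)))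
          (interior (Metric.closedBall (c j) (r j)))) ∧
      (∀ j,
        (∀ x ∈ Metric.closedBall (c j) (r j), ∀ y ∉ Ω,
            5 * R * (2 * r j) ≤ dist x y) ∧
        (∃ x ∈ Metric.closedBall (c j) (r j), ∃ y ∉ Ω,
            dist x y ≤ 15 * R * (2 * r j))) ∧
      ∃ C : ℝ, 0 < C ∧ ∀ x,
        (∑' j, (Metric.closedBall (c j) (R * r j)).indicator
            (fun _ => (1 : ℝ≥0∞)) x)
          ≤ ENNReal.ofReal C * Ω.indicator (fun _ => (1 : ℝ≥0∞)) x := by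
  classical
  have hR0 : (0:ℝ) < R := by linarith
  set 𝒮 : Set (ℤ × (Fin n → ℤ)) := {p | sel R Ω p} with h𝒮
  have hcup : Ω = ⋃ p ∈ 𝒮, cube p.1 p.2 := by
    apply Set.Subset.antisymm
    · intro x hx
      obtain ⟨p, hp, hxp⟩ := cover hR hΩ hproper hx
      exact Set.mem_biUnion hp hxp
    · intro x hx
      obtain ⟨p, hp, hxp⟩ := Set.mem_iUnion₂.mp hx
      exact sel_subset hR0 hp hxp
  have hinf : 𝒮.Infinite := by
    by_contra hfin
    rw [Set.not_infinite] at hfin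
    have hclosed : IsClosed Ω := by
      rw [hcup]
      exact hfin.isClosed_biUnion fun p _ => Metric.isClosed_closedBall
    have hpc : PreconnectedSpace (Fin n → ℝ) :=
      ⟨(convex_univ : Convex ℝ (Set.univ : Set (Fin n → ℝ))).isPreconnected⟩
    rcases isClopen_iff.mp ⟨hclosed, hΩ⟩ with h | h
    · exact hne.ne_empty h
    · exact hproper h
  have hcount : Countable ↥𝒮 := (Set.to_countable 𝒮).to_subtype
  have hinf' : Infinite ↥𝒮 := hinf.to_subtype
  obtain ⟨_i⟩ := nonempty_denumerable ↥𝒮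
  let e : ℕ ≃ ↥𝒮 := (@Denumerable.eqv ↥𝒮 _i).symm
  set k : ℕ → ℤ := fun j => ((e j : ℤ × (Fin n → ℤ))).1 with hk
  set z : ℕ → (Fin n → ℤ) := fun j => ((e j : ℤ × (Fin n → ℤ))).2 with hz
  have hsel : ∀ j, sel R Ω (k j, z j) := fun j => (e j).2
  set c : ℕ → (Fin n → ℝ) := fun j => ctr (k j) (z j) with hc
  set r : ℕ → ℝ := fun j => rad (k j) with hr
  have hrpos : ∀ j, 0 < r j := fun j => rad_pos _
  have hcb : ∀ j, Metric.closedBall (c j) (r j) = cube (k j) (z j) := fun _ => rfl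
  have h2r : ∀ j, 2 * r j = 2 ^ (k j) := by
    intro j
    simp only [hr, rad]
    ring
  -- pairwise disjoint interiors
  have hpair : Pairwise fun i j =>
      Disjoint (interior (Metric.closedBall (c i) (r i)))
        (interior (Metric.closedBall (c j) (r j))) := by
    intro i j hij
    rw [hcb, hcb]
    refine sel_disjoint hR0 (hsel i) (hsel j) ?_
    intro hEq
    apply hij
    have : (e i) = (e j) := Subtype.ext (by
      show ((e i : ℤ × (Fin n → ℤ))) = (e j : ℤ × (Fin n → ℤ))
      exact hEq)
    exact e.injective this
  -- union
  have hunion : Ω = ⋃ j, Metric.closedBall (c j) (r j) := by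
    rw [hcup]
    ext x
    simp only [Set.mem_iUnion, hcb]
    constructor
    · rintro ⟨p, hp, hxp⟩
      refine ⟨e.symm ⟨p, hp⟩, ?_⟩
      have hval : (k (e.symm ⟨p, hp⟩), z (e.symm ⟨p, hp⟩)) = p := by
        simp only [hk, hz]
        rw [Equiv.apply_symm_apply]
      have h1 : k (e.symm ⟨p, hp⟩) = p.1 := congrArg Prod.fst hval
      have h2 : z (e.symm ⟨p, hp⟩) = p.2 := congrArg Prod.snd hval
      rw [h1, h2]
      exact hxp
    · rintro ⟨j, hj⟩
      exact ⟨(k j, z j), hsel j, hj⟩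
  -- condition (i)
  have hcond : ∀ j,
      (∀ x ∈ Metric.closedBall (c j) (r j), ∀ y ∉ Ω,
          5 * R * (2 * r j) ≤ dist x y) ∧
      (∃ x ∈ Metric.closedBall (c j) (r j), ∃ y ∉ Ω,
          dist x y ≤ 15 * R * (2 * r j)) := by
    intro j
    constructor
    · intro x hx y hy
      rw [h2r j]
      exact (hsel j).1 x (by rwa [hcb] at hx) y hy
    · have hnp := (hsel j).2
      unfold good at hnp
      push_neg at hnp
      obtain ⟨x0, hx0, y0, hy0, hlt⟩ := hnp
      refine ⟨c j, Metric.mem_closedBall_self (hrpos j).le, y0, hy0, ?_⟩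
      have hcj : c j ∈ cube (k j + 1) (fun i => z j i / 2) :=
        cube_subset_parent _ _ (by rw [← hcb]; exact Metric.mem_closedBall_self (hrpos j).le)
      have hd1 : dist (c j) x0 ≤ 2 ^ (k j + 1) := dist_le_of_mem_cube hcj hx0
      have hd2 : dist (c j) y0 ≤ dist (c j) x0 + dist x0 y0 := dist_triangle _ _ _
      have hp1 : (2:ℝ) ^ (k j + 1) = 2 * 2 ^ (k j) := by
        rw [zpow_add_one₀ (two_ne_zero)]; ring
      rw [h2r j]
      have hq := two_zpow_pos (k j)
      nlinarith [hlt, hd1, hd2]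
  refine ⟨c, r, hrpos, hunion, hpair, hcond, (33*R)^n, by positivity, fun x => ?_⟩
  by_cases hxΩ : x ∈ Ω
  · rw [Set.indicator_of_mem hxΩ, mul_one]
    have hcne : Ωᶜ.Nonempty := nonempty_compl.mpr hproper
    set d := Metric.infDist x Ωᶜ with hdd
    have hd : 0 < d := by
      rw [hdd, ← hΩ.isClosed_compl.notMem_iff_infDist_pos hcne]
      simpa using hxΩ
    rw [ENNReal.tsum_eq_iSup_sum]
    refine iSup_le fun F => ?_
    have hsum : ∑ j ∈ F, (Metric.closedBall (c j) (R * r j)).indicator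
        (fun _ => (1:ℝ≥0∞)) x
        = ((F.filter (fun j => x ∈ Metric.closedBall (c j) (R * r j))).card : ℝ≥0∞) := by
      rw [← Finset.sum_boole]
      refine Finset.sum_congr rfl fun j _ => ?_
      rw [Set.indicator_apply]
    rw [hsum]
    set T := F.filter (fun j => x ∈ Metric.closedBall (c j) (R * r j)) with hT
    -- key distance estimates
    have hcdist : ∀ j, ∀ y ∈ Ωᶜ, 10 * R * r j ≤ dist (c j) y := by
      intro j y hy
      have := (hsel j).1 (c j)
        (by rw [← hcb]; exact Metric.mem_closedBall_self (hrpos j).le) y hy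
      rw [← h2r j] at this
      linarith
    have key1 : ∀ j ∈ T, d ≤ 33 * R * r j := by
      intro j hj
      have hxc : dist x (c j) ≤ R * r j := by
        have := (Finset.mem_filter.mp hj).2
        rwa [Metric.mem_closedBall] at this
      obtain ⟨x0, hx0, y0, hy0, hle⟩ := (hcond j).2
      have hcx0 : dist (c j) x0 ≤ 2 * r j := by
        rw [h2r j]
        exact dist_le_of_mem_cube (by rw [← hcb]; exact Metric.mem_closedBall_self (hrpos j).le)
          (by rwa [hcb] at hx0)
      have hdle : d ≤ dist x y0 := Metric.infDist_le_dist_of_mem hy0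
      have htri : dist x y0 ≤ dist x (c j) + dist (c j) x0 + dist x0 y0 :=
        dist_triangle4 x (c j) x0 y0
      have hrj := hrpos j
      nlinarith
    have key2 : ∀ j ∈ T, 9 * R * r j ≤ d := by
      intro j hj
      have hxc : dist x (c j) ≤ R * r j := by
        have := (Finset.mem_filter.mp hj).2
        rwa [Metric.mem_closedBall] at this
      by_contra hcon
      push_neg at hcon
      obtain ⟨y, hy, hylt⟩ := (Metric.infDist_lt_iff hcne).mp hcon
      have h1 := hcdist j y hy
      have h2 : dist (c j) y ≤ dist (c j) x + dist x y := dist_triangle _ _ _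
      rw [dist_comm (c j) x] at h2
      have hrj := hrpos j
      nlinarith
    -- disjointness of the open balls
    have hdisj : (↑T : Set ℕ).PairwiseDisjoint (fun j => Metric.ball (c j) (r j)) := by
      intro i hi j hj hij
      have h : Disjoint (interior (Metric.closedBall (c i) (r i)))
          (interior (Metric.closedBall (c j) (r j))) := hpair hij
      rw [interior_closedBall _ (hrpos i).ne', interior_closedBall _ (hrpos j).ne'] at h
      show Disjoint (Metric.ball (c i) (r i)) (Metric.ball (c j) (r j))
      exact h
    have hmeas : volume (⋃ j ∈ T, Metric.ball (c j) (r j))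
        = ∑ j ∈ T, volume (Metric.ball (c j) (r j)) :=
      measure_biUnion_finset hdisj fun j _ => measurableSet_ball
    have hsub2 : (⋃ j ∈ T, Metric.ball (c j) (r j)) ⊆ Metric.closedBall x d := by
      intro u hu
      obtain ⟨j, hj, hju⟩ := Set.mem_iUnion₂.mp hu
      rw [Metric.mem_ball] at hju
      rw [Metric.mem_closedBall]
      have h1 := key2 j hj
      have hxc : dist x (c j) ≤ R * r j := by
        have := (Finset.mem_filter.mp hj).2
        rwa [Metric.mem_closedBall] at this
      have h2 : dist u x ≤ dist u (c j) + dist (c j) x := dist_triangle _ _ _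
      rw [dist_comm (c j) x] at h2
      have hrj := hrpos j
      nlinarith
    have hvol : ∀ j ∈ T, ENNReal.ofReal ((2 * (d / (33*R)))^n)
        ≤ volume (Metric.ball (c j) (r j)) := by
      intro j hj
      rw [Real.volume_pi_ball _ (hrpos j), Fintype.card_fin]
      apply ENNReal.ofReal_le_ofReal
      apply pow_le_pow_left₀ (by positivity)
      have hk1 := key1 j hj
      have hdr : d / (33*R) ≤ r j := by
        rw [div_le_iff₀ (by positivity)]
        nlinarith
      linarith
    have htotal : (T.card : ℝ≥0∞) * ENNReal.ofReal ((2 * (d/(33*R)))^n)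
        ≤ ENNReal.ofReal ((2*d)^n) := by
      calc (T.card : ℝ≥0∞) * ENNReal.ofReal ((2 * (d/(33*R)))^n)
          = ∑ _j ∈ T, ENNReal.ofReal ((2 * (d/(33*R)))^n) := by
            rw [Finset.sum_const, nsmul_eq_mul]
        _ ≤ ∑ j ∈ T, volume (Metric.ball (c j) (r j)) := Finset.sum_le_sum hvol
        _ = volume (⋃ j ∈ T, Metric.ball (c j) (r j)) := hmeas.symm
        _ ≤ volume (Metric.closedBall x d) := measure_mono hsub2
        _ = ENNReal.ofReal ((2*d)^n) := by
            rw [Real.volume_pi_closedBall _ hd.le, Fintype.card_fin]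
    have hfac : (2*d)^n = (33*R)^n * (2*(d/(33*R)))^n := by
      rw [← mul_pow]
      congr 1
      field_simp
    rw [hfac, ENNReal.ofReal_mul (by positivity)] at htotal
    have hne0 : ENNReal.ofReal ((2*(d/(33*R)))^n) ≠ 0 :=
      (ENNReal.ofReal_pos.mpr (by positivity)).ne'
    exact (ENNReal.mul_le_mul_iff_left hne0 ENNReal.ofReal_ne_top).mp htotal
  · rw [Set.indicator_of_notMem hxΩ, mul_zero]
    have hzero : ∀ j, (Metric.closedBall (c j) (R * r j)).indicator
        (fun _ => (1:ℝ≥0∞)) x = 0 := by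
      intro j
      rw [Set.indicator_of_notMem]
      intro hmem
      rw [Metric.mem_closedBall] at hmem
      have hg := (hsel j).1 (c j)
        (by rw [← hcb]; exact Metric.mem_closedBall_self (hrpos j).le) x hxΩ
      rw [← h2r j, dist_comm x (c j)] at *
      have hrj := hrpos j
      nlinarith
    calc (∑' j, (Metric.closedBall (c j) (R * r j)).indicator (fun _ => (1:ℝ≥0∞)) x)
        = ∑' (_j : ℕ), (0:ℝ≥0∞) := tsum_congr hzero
      _ = 0 := tsum_zero
      _ ≤ 0 := le_refl _
end

section
/- Let p₀ ∈ (1,∞), β, ϱ ≥ 0, and let S be a sublinear operator with ‖Sf‖_{L^{p₀}} ≤ A₁‖f‖_{L^{p₀}} and the modular weak-type bound |{x : |Sf(x)| > λ}| ≤ A₂ ∫ (|f|/λ) log^ϱ(e+|f|/λ) dx for all λ > 0. Then for any two cubes Q₁, Q₂ ⊂ ℝⁿ, ∫_{Q₁} |S(fχ_{Q₂})(x)| log^β(e + |S(fχ_{Q₂})(x)|) dx ≤ C (|Q₁| + (A₁^{p₀} + A₂) ∫_{Q₂} |f(x)| log^{β+ϱ+1}(e + |f(x)|) dx), with C depending only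 on n, p₀, β, ϱ. -/
open MeasureTheory Set
open scoped ENNReal

/-!
With `Φ_β(t) = t log^β (e + t)`, one has pointwise
`Φ_β(|Sh|) ≤ Φ_β(1) + ∑_k Φ_β(2^(k+1)) 1{|Sh| > 2^k}`, so it suffices to bound the measures of
the level sets `{|Sh| > 2^k}`. Splitting `h` at height `2^k`, sublinearity bounds such a level
set by the level sets at height `2^(k-1)` of `S` applied to the two pieces: the bounded piece is
estimated by Chebyshev's inequality and the `L^p₀` bound, the large piece by the weak-type bound.
After summation in `k`, at most `≈ log (e + |h|)` weak-type terms of size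
`≲ |h| log^(β+ϱ) (e + |h|)` occur, and the `L^p₀` terms form a geometric series dominated by its
term at `k ≈ log₂ |h|`, which is `≲ Φ_β(|h|)`.
-/

namespace LlogL

noncomputable def logE (t : ℝ) : ℝ := Real.log (Real.exp 1 + t)

noncomputable def phiLog (β t : ℝ) : ℝ := t * logE t ^ β

lemma one_le_logE {t : ℝ} (ht : 0 ≤ t) : 1 ≤ logE t := by
  rw [logE, Real.le_log_iff_exp_le (by positivity)]
  linarith

lemma logE_pos {t : ℝ} (ht : 0 ≤ t) : 0 < logE t := one_pos.trans_le (one_le_logE ht)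

lemma logE_le_logE {s t : ℝ} (hs : 0 ≤ s) (hst : s ≤ t) : logE s ≤ logE t :=
  Real.log_le_log (by positivity) (by linarith)

lemma logE_two_mul_le {t : ℝ} (ht : 0 ≤ t) : logE (2 * t) ≤ 2 * logE t := by
  have he : 2 ≤ Real.exp 1 := by linarith [Real.add_one_le_exp 1]
  calc logE (2 * t) ≤ Real.log ((Real.exp 1 + t) ^ 2) :=
        Real.log_le_log (by positivity) (by nlinarith)
    _ = 2 * logE t := by rw [Real.log_pow]; norm_num [logE]

lemma logE_two_pow_succ_le (k : ℕ) : logE (2 ^ (k + 1)) ≤ 2 * (k + 1) := by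
  have h2 : (2 : ℝ) ≤ 2 ^ (k + 1) := le_self_pow₀ one_le_two (Nat.succ_ne_zero k)
  have he : 2 ≤ Real.exp 1 := by linarith [Real.add_one_le_exp 1]
  calc logE (2 ^ (k + 1)) ≤ Real.log (Real.exp 1 * 2 ^ (k + 1)) :=
        Real.log_le_log (by positivity) (by nlinarith)
    _ = 1 + (k + 1) * Real.log 2 := by
        rw [Real.log_mul (by positivity) (by positivity), Real.log_exp, Real.log_pow]
        push_cast; ring
    _ ≤ 2 * (k + 1) := by nlinarith [Real.log_two_lt_d9]

lemma succ_le_three_mul_logE {k : ℕ} {t : ℝ} (ht : 0 ≤ t) (hk : 2 ^ k ≤ Real.exp 1 + t) :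
    (k : ℝ) + 1 ≤ 3 * logE t := by
  have hlog : k * Real.log 2 ≤ logE t := by
    rw [← Real.log_pow]
    exact Real.log_le_log (by positivity) hk
  nlinarith [Real.log_two_gt_d9, one_le_logE ht]

lemma phiLog_zero (β : ℝ) : phiLog β 0 = 0 := zero_mul _

lemma phiLog_nonneg (β : ℝ) {t : ℝ} (ht : 0 ≤ t) : 0 ≤ phiLog β t :=
  mul_nonneg ht (Real.rpow_nonneg (logE_pos ht).le β)

lemma phiLog_pos {β t : ℝ} (ht : 0 < t) : 0 < phiLog β t :=
  mul_pos ht (Real.rpow_pos_of_pos (logE_pos ht.le) β)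

lemma phiLog_le_phiLog {β s t : ℝ} (hβ : 0 ≤ β) (hs : 0 ≤ s) (hst : s ≤ t) :
    phiLog β s ≤ phiLog β t :=
  mul_le_mul hst (Real.rpow_le_rpow (logE_pos hs).le (logE_le_logE hs hst) hβ)
    (Real.rpow_nonneg (logE_pos hs).le β) (hs.trans hst)

lemma phiLog_le_phiLog_of_exponent_le {β γ t : ℝ} (ht : 0 ≤ t) (hβγ : β ≤ γ) :
    phiLog β t ≤ phiLog γ t :=
  mul_le_mul_of_nonneg_left (Real.rpow_le_rpow_of_exponent_le (one_le_logE ht) hβγ) ht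

lemma phiLog_le_of_le_two_mul {β x t : ℝ} (hβ : 0 ≤ β) (hx : 0 ≤ x) (ht : 0 ≤ t)
    (hxt : x ≤ 2 * t) : phiLog β x ≤ x * (2 * logE t) ^ β :=
  mul_le_mul_of_nonneg_left (Real.rpow_le_rpow (logE_pos hx).le
    ((logE_le_logE hx hxt).trans (logE_two_mul_le ht)) hβ) hx

lemma summable_succ_rpow_mul_geometric (β : ℝ) {r : ℝ} (hr0 : 0 < r) (hr1 : r < 1) :
    Summable fun j : ℕ => ((j : ℝ) + 1) ^ β * r ^ j := by
  have hnat : Summable fun j : ℕ => ((j : ℝ) + 1) ^ ⌈β⌉₊ * r ^ j := by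
    have h0 : Summable fun j : ℕ => (j : ℝ) ^ ⌈β⌉₊ * r ^ j :=
      summable_pow_mul_geometric_of_norm_lt_one _ (by rwa [Real.norm_of_nonneg hr0.le])
    refine (((summable_nat_add_iff 1).2 h0).mul_left r⁻¹).congr fun j => ?_
    simp only [Nat.cast_add, Nat.cast_one, pow_succ]
    field_simp
  refine hnat.of_nonneg_of_le (fun j => by positivity) fun j => ?_
  gcongr
  rw [← Real.rpow_natCast]
  exact Real.rpow_le_rpow_of_exponent_le (le_add_of_nonneg_left (Nat.cast_nonneg _))
    (Nat.le_ceil β)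

/-- The tail of `∑ (k + 1) ^ β r ^ k` from `k₁` on is comparable to its first term, because
`k + 1 ≤ (k₁ + 1) (k - k₁ + 1)`. -/
lemma sum_Ico_succ_rpow_mul_geometric_le {β r : ℝ} (hβ : 0 ≤ β) (hr0 : 0 < r) (hr1 : r < 1)
    (k₁ n : ℕ) :
    ∑ k ∈ Finset.Ico k₁ n, ((k : ℝ) + 1) ^ β * r ^ k
      ≤ ((k₁ : ℝ) + 1) ^ β * r ^ k₁ * ∑' j : ℕ, ((j : ℝ) + 1) ^ β * r ^ j := by
  rw [Finset.sum_Ico_eq_sum_range]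
  calc ∑ j ∈ Finset.range (n - k₁), (((k₁ + j : ℕ) : ℝ) + 1) ^ β * r ^ (k₁ + j)
      ≤ ∑ j ∈ Finset.range (n - k₁), ((k₁ : ℝ) + 1) ^ β * r ^ k₁ * (((j : ℝ) + 1) ^ β * r ^ j) := by
        refine Finset.sum_le_sum fun j _ => ?_
        have hsplit : ((k₁ + j : ℕ) : ℝ) + 1 ≤ ((k₁ : ℝ) + 1) * ((j : ℝ) + 1) := by
          push_cast
          nlinarith [j.cast_nonneg (α := ℝ), k₁.cast_nonneg (α := ℝ)]
        calc (((k₁ + j : ℕ) : ℝ) + 1) ^ β * r ^ (k₁ + j)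
            ≤ (((k₁ : ℝ) + 1) * ((j : ℝ) + 1)) ^ β * (r ^ k₁ * r ^ j) := by
              rw [pow_add]; gcongr
          _ = _ := by rw [Real.mul_rpow (by positivity) (by positivity)]; ring
    _ ≤ _ := by
        rw [← Finset.mul_sum]
        gcongr
        exact (summable_succ_rpow_mul_geometric β hr0 hr1).sum_le_tsum _ fun j _ => by positivity

lemma exists_dyadic_scale {t : ℝ} (ht : 0 ≤ t) :
    ∃ k₁ : ℕ, (∀ k : ℕ, t ≤ 2 ^ k → k₁ ≤ k) ∧ t ≤ 2 ^ (k₁ + 1) ∧ (k₁ : ℝ) + 1 ≤ 3 * logE t := by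
  classical
  have hex : ∃ k : ℕ, t ≤ 2 ^ (k + 1) :=
    (pow_unbounded_of_one_lt t one_lt_two).imp fun k hk =>
      hk.le.trans (pow_le_pow_right₀ one_le_two k.le_succ)
  refine ⟨Nat.find hex, fun k hk =>
    Nat.find_min' hex (hk.trans (pow_le_pow_right₀ one_le_two k.le_succ)),
    Nat.find_spec hex, succ_le_three_mul_logE ht ?_⟩
  rcases h : Nat.find hex with _ | m
  · simp only [pow_zero]; linarith [Real.add_one_le_exp 1]
  · have := not_le.1 (Nat.find_min hex (by omega : m < Nat.find hex))
    linarith [Real.exp_pos 1]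

lemma geometric_mul_rpow_le {p t : ℝ} (hp : 1 < p) (ht : 0 ≤ t) {k : ℕ} (htk : t ≤ 2 ^ (k + 1)) :
    ((2 : ℝ) ^ (1 - p)) ^ k * t ^ p ≤ 2 ^ (p - 1) * t := by
  rcases ht.eq_or_lt with rfl | ht
  · rw [Real.zero_rpow (by linarith)]; simp
  have hscale : ((2 : ℝ) ^ (1 - p)) ^ k ≤ (t / 2) ^ (1 - p) := by
    rw [Real.rpow_pow_comm zero_le_two]
    exact Real.rpow_le_rpow_of_nonpos (by positivity) (by rw [pow_succ] at htk; linarith)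
      (by linarith)
  calc ((2 : ℝ) ^ (1 - p)) ^ k * t ^ p ≤ (t / 2) ^ (1 - p) * t ^ p := by gcongr
    _ = 2 ^ (p - 1) * t := by
        rw [Real.div_rpow ht.le zero_le_two, div_mul_eq_mul_div, ← Real.rpow_add ht,
          sub_add_cancel, Real.rpow_one, div_eq_mul_inv, ← Real.rpow_neg zero_le_two, neg_sub,
          mul_comm]

/-- `weakTerm ϱ lam |h x|` and `strongTerm p lam |h x|` are the integrands of the weak-type bound
for the part of `h` above `lam`, taken at height `lam / 2`, and of the `L^p` bound for the part
below `lam`. -/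
noncomputable def weakTerm (ϱ lam t : ℝ) : ℝ := if lam < t then phiLog ϱ (2 * t / lam) else 0

noncomputable def strongTerm (p lam t : ℝ) : ℝ := if t ≤ lam then t ^ p else 0

lemma weakTerm_nonneg (ϱ : ℝ) {lam t : ℝ} (hlam : 0 < lam) (ht : 0 ≤ t) : 0 ≤ weakTerm ϱ lam t := by
  unfold weakTerm
  split_ifs
  exacts [phiLog_nonneg ϱ (by positivity), le_rfl]

lemma strongTerm_nonneg (p lam : ℝ) {t : ℝ} (ht : 0 ≤ t) : 0 ≤ strongTerm p lam t := by
  unfold strongTerm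
  split_ifs
  exacts [Real.rpow_nonneg ht p, le_rfl]

lemma card_filter_two_pow_lt_le {t : ℝ} (ht : 0 ≤ t) (n : ℕ) :
    (((Finset.range n).filter fun k => (2 : ℝ) ^ k < t).card : ℝ) ≤ 3 * logE t := by
  have hsub : (Finset.range n).filter (fun k => (2 : ℝ) ^ k < t) ⊆ Finset.range ⌊3 * logE t⌋₊ := by
    intro k hk
    have hk3 := succ_le_three_mul_logE (k := k) ht
      (by linarith [(Finset.mem_filter.1 hk).2, Real.exp_pos 1])
    exact Finset.mem_range.2 (Nat.le_floor (by push_cast; linarith))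
  calc (((Finset.range n).filter fun k => (2 : ℝ) ^ k < t).card : ℝ) ≤ ⌊3 * logE t⌋₊ := by
        exact_mod_cast (Finset.card_le_card hsub).trans (Finset.card_range _).le
    _ ≤ 3 * logE t := Nat.floor_le (by linarith [logE_pos ht])

/-- Each of the at most `3 logE t` nonzero terms is `≲ t logE(t)^(β+ϱ)`. -/
lemma sum_weakTerm_le {β ϱ t : ℝ} (hβ : 0 ≤ β) (hϱ : 0 ≤ ϱ) (ht : 0 ≤ t) (n : ℕ) :
    ∑ k ∈ Finset.range n, phiLog β (2 ^ (k + 1)) * weakTerm ϱ (2 ^ k) t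
      ≤ 12 * 2 ^ (β + ϱ) * phiLog (β + ϱ + 1) t := by
  set s := (Finset.range n).filter fun k => (2 : ℝ) ^ k < t
  have hL := logE_pos ht
  have hterm : ∀ k ∈ s, phiLog β (2 ^ (k + 1)) * phiLog ϱ (2 * t / 2 ^ k)
      ≤ 4 * t * (2 * logE t) ^ (β + ϱ) := by
    intro k hk
    have hkt : (2 : ℝ) ^ k < t := (Finset.mem_filter.1 hk).2
    have h1 : (1 : ℝ) ≤ 2 ^ k := one_le_pow₀ one_le_two
    calc phiLog β (2 ^ (k + 1)) * phiLog ϱ (2 * t / 2 ^ k)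
        ≤ (2 ^ (k + 1) * (2 * logE t) ^ β) * (2 * t / 2 ^ k * (2 * logE t) ^ ϱ) := by
          refine mul_le_mul (phiLog_le_of_le_two_mul hβ (by positivity) ht ?_)
            (phiLog_le_of_le_two_mul hϱ (by positivity) ht ?_) (phiLog_nonneg _ (by positivity))
            (by positivity)
          · rw [pow_succ]; linarith
          · rw [div_le_iff₀ (by positivity)]; nlinarith
      _ = 4 * t * (2 * logE t) ^ (β + ϱ) := by
          rw [Real.rpow_add (by linarith), pow_succ]
          field_simp
          ring
  calc ∑ k ∈ Finset.range n, phiLog β (2 ^ (k + 1)) * weakTerm ϱ (2 ^ k) t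
      = ∑ k ∈ s, phiLog β (2 ^ (k + 1)) * phiLog ϱ (2 * t / 2 ^ k) := by
        simp only [weakTerm, mul_ite, mul_zero, s, Finset.sum_filter]
    _ ≤ s.card • (4 * t * (2 * logE t) ^ (β + ϱ)) := Finset.sum_le_card_nsmul _ _ _ hterm
    _ ≤ 3 * logE t * (4 * t * (2 * logE t) ^ (β + ϱ)) := by
        rw [nsmul_eq_mul]
        exact mul_le_mul_of_nonneg_right (card_filter_two_pow_lt_le ht n) (by positivity)
    _ = 12 * 2 ^ (β + ϱ) * phiLog (β + ϱ + 1) t := by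
        rw [phiLog, Real.mul_rpow zero_le_two hL.le, Real.rpow_add_one hL.ne']
        ring

lemma phiLog_two_pow_succ_div_le {β p : ℝ} (hβ : 0 ≤ β) (k : ℕ) :
    phiLog β (2 ^ (k + 1)) / (2 ^ k / 2) ^ p
      ≤ 2 ^ (1 + β + p) * (((k : ℝ) + 1) ^ β * ((2 : ℝ) ^ (1 - p)) ^ k) := by
  have h2k : (0 : ℝ) < 2 ^ k := by positivity
  have hphi : phiLog β (2 ^ (k + 1)) ≤ 2 ^ (k + 1) * (2 * ((k : ℝ) + 1)) ^ β :=
    mul_le_mul_of_nonneg_left (Real.rpow_le_rpow (logE_pos (by positivity)).le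
      (logE_two_pow_succ_le k) hβ) (by positivity)
  calc phiLog β (2 ^ (k + 1)) / (2 ^ k / 2) ^ p
      ≤ 2 ^ (k + 1) * (2 * ((k : ℝ) + 1)) ^ β / (2 ^ k / 2) ^ p := by gcongr
    _ = 2 ^ (1 + β + p) * (((k : ℝ) + 1) ^ β * ((2 : ℝ) ^ (1 - p)) ^ k) := by
        rw [Real.rpow_pow_comm zero_le_two, Real.rpow_sub h2k, Real.rpow_one,
          Real.div_rpow h2k.le zero_le_two, Real.mul_rpow zero_le_two (by positivity),
          Real.rpow_add two_pos, Real.rpow_add two_pos, Real.rpow_one]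
        field_simp
        ring

/-- The nonzero terms have `k ≥ k₁ ≈ log₂ t` and decay geometrically from there on. -/
lemma exists_sum_strongTerm_le {β p : ℝ} (hβ : 0 ≤ β) (hp : 1 < p) :
    ∃ C : ℝ, 0 ≤ C ∧ ∀ t : ℝ, 0 ≤ t → ∀ n : ℕ,
      ∑ k ∈ Finset.range n, phiLog β (2 ^ (k + 1)) / (2 ^ k / 2) ^ p * strongTerm p (2 ^ k) t
        ≤ C * phiLog β t := by
  set r : ℝ := 2 ^ (1 - p)
  have hr0 : 0 < r := by positivity
  have hr1 : r < 1 := Real.rpow_lt_one_of_one_lt_of_neg one_lt_two (by linarith)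
  set T := ∑' j : ℕ, ((j : ℝ) + 1) ^ β * r ^ j
  have hT : 0 ≤ T := tsum_nonneg fun j => by positivity
  refine ⟨2 ^ (1 + β + p) * T * 3 ^ β * 2 ^ (p - 1), by positivity, fun t ht n => ?_⟩
  obtain ⟨k₁, hk₁min, hk₁t, hk₁L⟩ := exists_dyadic_scale ht
  have hL := logE_pos ht
  calc ∑ k ∈ Finset.range n, phiLog β (2 ^ (k + 1)) / (2 ^ k / 2) ^ p * strongTerm p (2 ^ k) t
      = ∑ k ∈ Finset.Ico k₁ n,
          phiLog β (2 ^ (k + 1)) / (2 ^ k / 2) ^ p * strongTerm p (2 ^ k) t := by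
        refine (Finset.sum_subset (fun k hk => Finset.mem_range.2 (Finset.mem_Ico.1 hk).2)
          fun k hkn hk => ?_).symm
        have hlt : 2 ^ k < t := not_le.1 fun h => hk (Finset.mem_Ico.2
          ⟨hk₁min k h, Finset.mem_range.1 hkn⟩)
        simp [strongTerm, not_le.2 hlt]
    _ ≤ ∑ k ∈ Finset.Ico k₁ n, 2 ^ (1 + β + p) * (((k : ℝ) + 1) ^ β * r ^ k) * t ^ p := by
        refine Finset.sum_le_sum fun k _ => mul_le_mul (phiLog_two_pow_succ_div_le hβ k) ?_
          (strongTerm_nonneg _ _ ht) (by positivity)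
        unfold strongTerm
        split_ifs
        exacts [le_rfl, Real.rpow_nonneg ht p]
    _ = 2 ^ (1 + β + p) * t ^ p * ∑ k ∈ Finset.Ico k₁ n, ((k : ℝ) + 1) ^ β * r ^ k := by
        rw [Finset.mul_sum]
        exact Finset.sum_congr rfl fun k _ => by ring
    _ ≤ 2 ^ (1 + β + p) * t ^ p * (((k₁ : ℝ) + 1) ^ β * r ^ k₁ * T) := by
        gcongr
        exact sum_Ico_succ_rpow_mul_geometric_le hβ hr0 hr1 k₁ n
    _ = 2 ^ (1 + β + p) * T * ((k₁ : ℝ) + 1) ^ β * (r ^ k₁ * t ^ p) := by ring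
    _ ≤ 2 ^ (1 + β + p) * T * (3 * logE t) ^ β * (2 ^ (p - 1) * t) := by
        gcongr 2 ^ (1 + β + p) * T * ?_ * ?_
        · exact Real.rpow_le_rpow (by positivity) hk₁L hβ
        · exact geometric_mul_rpow_le hp ht hk₁t
    _ = 2 ^ (1 + β + p) * T * 3 ^ β * 2 ^ (p - 1) * phiLog β t := by
        rw [Real.mul_rpow (by norm_num) hL.le, phiLog]
        ring

lemma exists_sum_dyadic_le {β ϱ p : ℝ} (hβ : 0 ≤ β) (hϱ : 0 ≤ ϱ) (hp : 1 < p) :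
    ∃ K : ℝ, 0 ≤ K ∧ ∀ A₁ A₂ : ℝ, 0 ≤ A₁ → 0 ≤ A₂ → ∀ t : ℝ, 0 ≤ t → ∀ n : ℕ,
      ∑ k ∈ Finset.range n, phiLog β (2 ^ (k + 1)) *
          (A₂ * weakTerm ϱ (2 ^ k) t + A₁ ^ p / (2 ^ k / 2) ^ p * strongTerm p (2 ^ k) t)
        ≤ K * (A₁ ^ p + A₂) * phiLog (β + ϱ + 1) t := by
  obtain ⟨Cs, hCs, hstrong⟩ := exists_sum_strongTerm_le hβ hp
  refine ⟨12 * 2 ^ (β + ϱ) + Cs, by positivity, fun A₁ A₂ hA₁ hA₂ t ht n => ?_⟩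
  have hA₁p : 0 ≤ A₁ ^ p := Real.rpow_nonneg hA₁ p
  have hΦ : 0 ≤ phiLog (β + ϱ + 1) t := phiLog_nonneg _ ht
  have hw := mul_le_mul_of_nonneg_left (sum_weakTerm_le hβ hϱ ht n) hA₂
  have hs := mul_le_mul_of_nonneg_left ((hstrong t ht n).trans (mul_le_mul_of_nonneg_left
    (phiLog_le_phiLog_of_exponent_le (γ := β + ϱ + 1) ht (by linarith)) hCs)) hA₁p
  calc ∑ k ∈ Finset.range n, phiLog β (2 ^ (k + 1)) *
        (A₂ * weakTerm ϱ (2 ^ k) t + A₁ ^ p / (2 ^ k / 2) ^ p * strongTerm p (2 ^ k) t)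
      = A₂ * ∑ k ∈ Finset.range n, phiLog β (2 ^ (k + 1)) * weakTerm ϱ (2 ^ k) t
        + A₁ ^ p * ∑ k ∈ Finset.range n,
            phiLog β (2 ^ (k + 1)) / (2 ^ k / 2) ^ p * strongTerm p (2 ^ k) t := by
        rw [Finset.mul_sum, Finset.mul_sum, ← Finset.sum_add_distrib]
        exact Finset.sum_congr rfl fun k _ => by ring
    _ ≤ (12 * 2 ^ (β + ϱ) + Cs) * (A₁ ^ p + A₂) * phiLog (β + ϱ + 1) t := by
        nlinarith [mul_nonneg (mul_nonneg hA₁p (by positivity : (0:ℝ) ≤ 12 * 2 ^ (β + ϱ))) hΦ,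
          mul_nonneg (mul_nonneg hA₂ hCs) hΦ]

lemma tsum_ofReal_le_of_sum_range_le {f : ℕ → ℝ} (hf : ∀ k, 0 ≤ f k) {c : ℝ}
    (h : ∀ n, ∑ k ∈ Finset.range n, f k ≤ c) : ∑' k, ENNReal.ofReal (f k) ≤ ENNReal.ofReal c :=
  ENNReal.tsum_le_of_sum_range_le fun n => by
    rw [← ENNReal.ofReal_sum_of_nonneg fun k _ => hf k]
    exact ENNReal.ofReal_le_ofReal (h n)

lemma le_add_tsum_ite {ψ : ℕ → ℝ≥0∞} {y : ℝ≥0∞} (hy : ∃ k, y ≤ ψ k) :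
    y ≤ ψ 0 + ∑' k, if ψ k < y then ψ (k + 1) else 0 := by
  classical
  rcases h : Nat.find hy with _ | k
  · exact (h ▸ Nat.find_spec hy).trans le_self_add
  · have hlt : ψ k < y := not_le.1 (Nat.find_min hy (by omega))
    calc y ≤ ψ (k + 1) := h ▸ Nat.find_spec hy
      _ = if ψ k < y then ψ (k + 1) else 0 := (if_pos hlt).symm
      _ ≤ ∑' k, if ψ k < y then ψ (k + 1) else 0 := ENNReal.le_tsum k
      _ ≤ _ := le_add_self

lemma phiLog_abs_indicator_compl_div_eq_weakTerm {α : Type*} {ϱ lam : ℝ} (h : α → ℝ) (x : α) :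
    phiLog ϱ (|({y | |h y| ≤ lam}ᶜ.indicator h) x| / (lam / 2)) = weakTerm ϱ lam |h x| := by
  by_cases hx : |h x| ≤ lam
  · simp [indicator, hx, weakTerm, phiLog_zero]
  · simp [indicator, hx, weakTerm, not_le.1 hx]
    ring_nf

lemma enorm_indicator_rpow_eq_strongTerm {α : Type*} {p lam : ℝ} (hp : 0 < p) (h : α → ℝ) (x : α) :
    ‖({y | |h y| ≤ lam}.indicator h) x‖ₑ ^ p = ENNReal.ofReal (strongTerm p lam |h x|) := by
  by_cases hx : |h x| ≤ lam
  · simp [indicator, hx, strongTerm, Real.enorm_eq_ofReal_abs, ENNReal.ofReal_rpow_of_nonneg, hp.le]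
  · simp [indicator, hx, strongTerm, hp]

section MeasureTheory

variable {α : Type*} [MeasurableSpace α] {μ : Measure α}

/-- The layers are taken for a measurable minorant of `G` with the same integral, so that no
measurability of `G` is needed. -/
lemma exists_measurable_layers (G : α → ℝ≥0∞) {ψ : ℕ → ℝ≥0∞} (hψ : ∀ x, ∃ k, G x ≤ ψ k) :
    ∃ D : ℕ → Set α, (∀ k, MeasurableSet (D k)) ∧ (∀ k, D k ⊆ {x | ψ k < G x}) ∧
      ∫⁻ x, G x ∂μ ≤ ψ 0 * μ univ + ∑' k, ψ (k + 1) * μ (D k) := by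
  obtain ⟨φ, hφm, hφG, hφeq⟩ := exists_measurable_le_lintegral_eq μ G
  have hD : ∀ k, MeasurableSet {x | ψ k < φ x} := fun k => measurableSet_lt measurable_const hφm
  refine ⟨fun k => {x | ψ k < φ x}, hD, fun k x hx => lt_of_lt_of_le hx (hφG x), ?_⟩
  rw [hφeq]
  calc ∫⁻ x, φ x ∂μ
      ≤ ∫⁻ x, ψ 0 + ∑' k, {x | ψ k < φ x}.indicator (fun _ => ψ (k + 1)) x ∂μ := by
        refine lintegral_mono fun x => ?_
        simp only [indicator_apply, mem_ofPred_eq]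
        exact le_add_tsum_ite (((hψ x).imp fun k hk => (hφG x).trans hk))
    _ = ψ 0 * μ univ + ∑' k, ψ (k + 1) * μ {x | ψ k < φ x} := by
        rw [lintegral_add_left measurable_const, lintegral_const,
          lintegral_tsum fun k => (measurable_const.indicator (hD k)).aemeasurable]
        simp only [lintegral_indicator_const (hD _)]

lemma tsum_lintegral_le_lintegral_tsum (f : ℕ → α → ℝ≥0∞) :
    ∑' k, ∫⁻ x, f k x ∂μ ≤ ∫⁻ x, ∑' k, f k x ∂μ := by
  refine ENNReal.tsum_le_of_sum_range_le fun n => ?_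
  calc ∑ k ∈ Finset.range n, ∫⁻ x, f k x ∂μ ≤ ∫⁻ x, ∑ k ∈ Finset.range n, f k x ∂μ := by
        induction n with
        | zero => simp
        | succ n ih =>
          simp only [Finset.sum_range_succ]
          exact (add_le_add_left ih _).trans (le_lintegral_add _ _)
    _ ≤ ∫⁻ x, ∑' k, f k x ∂μ := lintegral_mono fun x => ENNReal.sum_le_tsum _

/-- `B` need not be measurable: only its outer measure enters, through a measurable hull. -/
lemma measure_le_add_inv_mul_lintegral {E A B : Set α} (hE : MeasurableSet E) (hEAB : E ⊆ A ∪ B)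
    {c : ℝ≥0∞} (hc0 : c ≠ 0) (hc : c ≠ ∞) {F : α → ℝ≥0∞} (hF : ∀ x ∈ A, c ≤ F x) :
    μ E ≤ μ B + c⁻¹ * ∫⁻ x, F x ∂μ := by
  set W := toMeasurable μ B
  have hEW : MeasurableSet (E \ W) := hE.diff (measurableSet_toMeasurable μ B)
  have hcheb : c * μ (E \ W) ≤ ∫⁻ x, F x ∂μ := by
    rw [← lintegral_indicator_const hEW]
    refine lintegral_mono fun x => ?_
    by_cases hx : x ∈ E \ W
    · rw [indicator_of_mem hx]
      exact hF x ((hEAB hx.1).resolve_right fun hB => hx.2 (subset_toMeasurable μ B hB))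
    · simp [hx]
  calc μ E ≤ μ (E ∩ W) + μ (E \ W) := measure_le_inter_add_sdiff μ E W
    _ ≤ μ B + c⁻¹ * ∫⁻ x, F x ∂μ := by
        refine add_le_add ?_ ((ENNReal.mul_le_iff_le_inv hc0 hc).1 hcheb)
        exact (measure_mono inter_subset_right).trans (measure_toMeasurable B).le

lemma lintegral_enorm_rpow_le_of_eLpNorm_le {E F : Type*} [NormedAddCommGroup E]
    [NormedAddCommGroup F] {p : ℝ} (hp : 0 < p) {f : α → E} {g : α → F} {A : ℝ≥0∞}
    (h : eLpNorm f (ENNReal.ofReal p) μ ≤ A * eLpNorm g (ENNReal.ofReal p) μ) :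
    ∫⁻ x, ‖f x‖ₑ ^ p ∂μ ≤ A ^ p * ∫⁻ x, ‖g x‖ₑ ^ p ∂μ := by
  have hp0 : ENNReal.ofReal p ≠ 0 := (ENNReal.ofReal_pos.2 hp).ne'
  rw [eLpNorm_eq_eLpNorm' hp0 ENNReal.ofReal_ne_top, eLpNorm_eq_eLpNorm' hp0 ENNReal.ofReal_ne_top,
    ENNReal.toReal_ofReal hp.le] at h
  rw [lintegral_rpow_enorm_eq_rpow_eLpNorm' hp, lintegral_rpow_enorm_eq_rpow_eLpNorm' hp,
    ← ENNReal.mul_rpow_of_nonneg _ _ hp.le]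
  exact ENNReal.rpow_le_rpow h hp.le

lemma ofReal_mul_lintegral_add_le {a b : ℝ} (ha : 0 ≤ a) (hb : 0 ≤ b) {f g : α → ℝ}
    (hf : ∀ x, 0 ≤ f x) (hg : ∀ x, 0 ≤ g x) :
    ENNReal.ofReal a * ∫⁻ x, ENNReal.ofReal (f x) ∂μ
        + ENNReal.ofReal b * ∫⁻ x, ENNReal.ofReal (g x) ∂μ
      ≤ ∫⁻ x, ENNReal.ofReal (a * f x + b * g x) ∂μ := by
  rw [← lintegral_const_mul' _ _ ENNReal.ofReal_ne_top,
    ← lintegral_const_mul' _ _ ENNReal.ofReal_ne_top]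
  refine (le_lintegral_add _ _).trans (le_of_eq (lintegral_congr fun x => ?_))
  rw [ENNReal.ofReal_add (mul_nonneg ha (hf x)) (mul_nonneg hb (hg x)),
    ENNReal.ofReal_mul ha, ENNReal.ofReal_mul hb]

lemma exists_setLIntegral_phiLog_le_add_tsum {β : ℝ} (hβ : 0 ≤ β) (g : α → ℝ) (Q : Set α) :
    ∃ D : ℕ → Set α, (∀ k, MeasurableSet (D k)) ∧ (∀ k, D k ⊆ {x | 2 ^ k < |g x|}) ∧
      ∫⁻ x in Q, ENNReal.ofReal (phiLog β |g x|) ∂μ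
        ≤ ENNReal.ofReal (phiLog β 1) * μ Q
          + ∑' k, ENNReal.ofReal (phiLog β (2 ^ (k + 1))) * μ (D k) := by
  have hψ : ∀ x, ∃ k : ℕ, ENNReal.ofReal (phiLog β |g x|) ≤ ENNReal.ofReal (phiLog β (2 ^ k)) :=
    fun x => (pow_unbounded_of_one_lt |g x| one_lt_two).imp fun k hk =>
      ENNReal.ofReal_le_ofReal (phiLog_le_phiLog hβ (abs_nonneg _) hk.le)
  obtain ⟨D, hDm, hDg, hlayer⟩ := exists_measurable_layers (μ := μ.restrict Q) _ hψ
  refine ⟨D, hDm, fun k x hx => not_le.1 fun hle => (hDg k hx).not_ge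
    (ENNReal.ofReal_le_ofReal (phiLog_le_phiLog hβ (abs_nonneg _) hle)), ?_⟩
  rw [Measure.restrict_apply_univ, pow_zero] at hlayer
  refine hlayer.trans (add_le_add le_rfl (ENNReal.tsum_le_tsum fun k => ?_))
  gcongr
  exact Measure.restrict_le_self

lemma lintegral_phiLog_abs_indicator {s : Set α} (hs : MeasurableSet s) (γ : ℝ) (f : α → ℝ) :
    ∫⁻ x, ENNReal.ofReal (phiLog γ |s.indicator f x|) ∂μ
      = ∫⁻ x in s, ENNReal.ofReal (phiLog γ |f x|) ∂μ := by
  rw [← lintegral_indicator hs]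
  congr 1 with x
  by_cases hx : x ∈ s <;> simp [hx, phiLog_zero]

variable {S : (α → ℝ) → α → ℝ} {p β ϱ A₁ A₂ : ℝ}

lemma measure_le_lintegral_weakTerm_add_strongTerm (hp : 0 < p) (hA₁ : 0 ≤ A₁) (hA₂ : 0 ≤ A₂)
    (hsub : ∀ f g : α → ℝ, ∀ x, |S (f + g) x| ≤ |S f x| + |S g x|)
    (hLp : ∀ f : α → ℝ,
      eLpNorm (S f) (ENNReal.ofReal p) μ ≤ ENNReal.ofReal A₁ * eLpNorm f (ENNReal.ofReal p) μ)
    (hweak : ∀ (f : α → ℝ) (lam : ℝ), 0 < lam →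
      μ {x | lam < |S f x|} ≤ ENNReal.ofReal A₂ * ∫⁻ x, ENNReal.ofReal (phiLog ϱ (|f x| / lam)) ∂μ)
    {h : α → ℝ} {lam : ℝ} (hlam : 0 < lam) {D : Set α} (hD : MeasurableSet D)
    (hDh : D ⊆ {x | lam < |S h x|}) :
    μ D ≤ ∫⁻ x, ENNReal.ofReal
      (A₂ * weakTerm ϱ lam |h x| + A₁ ^ p / (lam / 2) ^ p * strongTerm p lam |h x|) ∂μ := by
  set u := {y | |h y| ≤ lam}.indicator h
  set v := {y | |h y| ≤ lam}ᶜ.indicator h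
  have hcover : D ⊆ {x | lam / 2 < |S u x|} ∪ {x | lam / 2 < |S v x|} := by
    intro x hx
    by_contra hc
    simp only [mem_union, mem_ofPred_eq, not_or, not_lt] at hc
    have := hsub u v x
    rw [indicator_self_add_compl] at this
    have hlt : lam < |S h x| := hDh hx
    linarith
  have hc0 : ENNReal.ofReal (lam / 2) ^ p ≠ 0 := by
    simp [ENNReal.rpow_eq_zero_iff, hlam, hp]
  have hc : ENNReal.ofReal (lam / 2) ^ p ≠ ∞ :=
    ENNReal.rpow_ne_top_of_nonneg hp.le ENNReal.ofReal_ne_top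
  have hcheb := measure_le_add_inv_mul_lintegral (μ := μ) hD hcover hc0 hc
    (F := fun x => ‖S u x‖ₑ ^ p) fun x hx => by
      rw [Real.enorm_eq_ofReal_abs]
      exact ENNReal.rpow_le_rpow (ENNReal.ofReal_le_ofReal (le_of_lt hx)) hp.le
  have hv : μ {x | lam / 2 < |S v x|}
      ≤ ENNReal.ofReal A₂ * ∫⁻ x, ENNReal.ofReal (weakTerm ϱ lam |h x|) ∂μ := by
    simpa only [v, phiLog_abs_indicator_compl_div_eq_weakTerm]
      using hweak v (lam / 2) (by positivity)
  have hu : ∫⁻ x, ‖S u x‖ₑ ^ p ∂μ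
      ≤ ENNReal.ofReal (A₁ ^ p) * ∫⁻ x, ENNReal.ofReal (strongTerm p lam |h x|) ∂μ := by
    simpa only [enorm_indicator_rpow_eq_strongTerm hp, ENNReal.ofReal_rpow_of_nonneg hA₁ hp.le, u]
      using lintegral_enorm_rpow_le_of_eLpNorm_le hp (hLp u)
  calc μ D ≤ ENNReal.ofReal A₂ * ∫⁻ x, ENNReal.ofReal (weakTerm ϱ lam |h x|) ∂μ
        + ENNReal.ofReal (A₁ ^ p / (lam / 2) ^ p)
          * ∫⁻ x, ENNReal.ofReal (strongTerm p lam |h x|) ∂μ := by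
        refine hcheb.trans (add_le_add hv ?_)
        have hconst : (ENNReal.ofReal (lam / 2) ^ p)⁻¹ * ENNReal.ofReal (A₁ ^ p)
            = ENNReal.ofReal (A₁ ^ p / (lam / 2) ^ p) := by
          rw [ENNReal.ofReal_rpow_of_nonneg (by positivity) hp.le,
            ENNReal.ofReal_div_of_pos (by positivity), ENNReal.div_eq_inv_mul]
        rw [← hconst, mul_assoc]
        gcongr
    _ ≤ _ := ofReal_mul_lintegral_add_le hA₂ (by positivity)
        (fun x => weakTerm_nonneg ϱ hlam (abs_nonneg _))
        fun x => strongTerm_nonneg p lam (abs_nonneg _)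

theorem setLIntegral_phiLog_le (hp : 0 < p) (hβ : 0 ≤ β) (hA₁ : 0 ≤ A₁) (hA₂ : 0 ≤ A₂)
    (hsub : ∀ f g : α → ℝ, ∀ x, |S (f + g) x| ≤ |S f x| + |S g x|)
    (hLp : ∀ f : α → ℝ,
      eLpNorm (S f) (ENNReal.ofReal p) μ ≤ ENNReal.ofReal A₁ * eLpNorm f (ENNReal.ofReal p) μ)
    (hweak : ∀ (f : α → ℝ) (lam : ℝ), 0 < lam →
      μ {x | lam < |S f x|} ≤ ENNReal.ofReal A₂ * ∫⁻ x, ENNReal.ofReal (phiLog ϱ (|f x| / lam)) ∂μ)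
    {K : ℝ} (hK0 : 0 ≤ K) (hK : ∀ t : ℝ, 0 ≤ t → ∀ n : ℕ,
      ∑ k ∈ Finset.range n, phiLog β (2 ^ (k + 1)) *
          (A₂ * weakTerm ϱ (2 ^ k) t + A₁ ^ p / (2 ^ k / 2) ^ p * strongTerm p (2 ^ k) t)
        ≤ K * (A₁ ^ p + A₂) * phiLog (β + ϱ + 1) t) (h : α → ℝ) (Q : Set α) :
    ∫⁻ x in Q, ENNReal.ofReal (phiLog β |S h x|) ∂μ
      ≤ ENNReal.ofReal (phiLog β 1 + K) * (μ Q + ENNReal.ofReal (A₁ ^ p + A₂) *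
          ∫⁻ x, ENNReal.ofReal (phiLog (β + ϱ + 1) |h x|) ∂μ) := by
  obtain ⟨D, hDm, hDh, hlayer⟩ := exists_setLIntegral_phiLog_le_add_tsum (μ := μ) hβ (S h) Q
  have hsA : 0 ≤ A₁ ^ p + A₂ := add_nonneg (Real.rpow_nonneg hA₁ p) hA₂
  have hlevel : ∀ k : ℕ, ENNReal.ofReal (phiLog β (2 ^ (k + 1))) * μ (D k)
      ≤ ∫⁻ x, ENNReal.ofReal (phiLog β (2 ^ (k + 1)) * (A₂ * weakTerm ϱ (2 ^ k) |h x|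
          + A₁ ^ p / (2 ^ k / 2) ^ p * strongTerm p (2 ^ k) |h x|)) ∂μ := fun k => by
    simp_rw [ENNReal.ofReal_mul (phiLog_nonneg β (by positivity : (0 : ℝ) ≤ 2 ^ (k + 1)))]
    rw [lintegral_const_mul' _ _ ENNReal.ofReal_ne_top]
    gcongr
    exact measure_le_lintegral_weakTerm_add_strongTerm hp hA₁ hA₂ hsub hLp hweak
      (by positivity) (hDm k) (hDh k)
  calc ∫⁻ x in Q, ENNReal.ofReal (phiLog β |S h x|) ∂μ
      ≤ ENNReal.ofReal (phiLog β 1) * μ Q + ∫⁻ x, ∑' k : ℕ, ENNReal.ofReal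
          (phiLog β (2 ^ (k + 1)) * (A₂ * weakTerm ϱ (2 ^ k) |h x|
            + A₁ ^ p / (2 ^ k / 2) ^ p * strongTerm p (2 ^ k) |h x|)) ∂μ :=
        hlayer.trans (add_le_add le_rfl ((ENNReal.tsum_le_tsum hlevel).trans
          (tsum_lintegral_le_lintegral_tsum _)))
    _ ≤ ENNReal.ofReal (phiLog β 1) * μ Q + ∫⁻ x, ENNReal.ofReal
          (K * (A₁ ^ p + A₂) * phiLog (β + ϱ + 1) |h x|) ∂μ := by
        gcongr with x
        refine tsum_ofReal_le_of_sum_range_le (fun k => ?_) (hK _ (abs_nonneg _))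
        have := weakTerm_nonneg ϱ (by positivity : (0 : ℝ) < 2 ^ k) (abs_nonneg (h x))
        have := strongTerm_nonneg p (2 ^ k) (abs_nonneg (h x))
        have := phiLog_nonneg β (by positivity : (0 : ℝ) ≤ 2 ^ (k + 1))
        have := Real.rpow_nonneg hA₁ p
        positivity
    _ ≤ _ := by
        simp_rw [ENNReal.ofReal_mul (mul_nonneg hK0 hsA)]
        rw [lintegral_const_mul' _ _ ENNReal.ofReal_ne_top, ENNReal.ofReal_mul hK0, mul_add,
          ← mul_assoc, ENNReal.ofReal_add (phiLog_nonneg β zero_le_one) hK0]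
        gcongr <;> simp

end MeasureTheory

end LlogL

/-- Lemma 2.1 of the paper: if a sublinear operator `S` is bounded on
`L^{p₀}` with norm `A₁` and satisfies the modular weak-type bound
`|{|Sf| > λ}| ≤ A₂ ∫ (|f|/λ) log^ϱ(e+|f|/λ)`, then for any cubes `Q₁, Q₂`,
`∫_{Q₁} |S(fχ_{Q₂})| log^β(e + |S(fχ_{Q₂})|)
   ≤ C (|Q₁| + (A₁^{p₀}+A₂) ∫_{Q₂} |f| log^{β+ϱ+1}(e+|f|))`. -/
theorem stmt_10 (n : ℕ) (p₀ β ϱ A₁ A₂ : ℝ)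
    (hp₀ : 1 < p₀) (hβ : 0 ≤ β) (hϱ : 0 ≤ ϱ) (hA₁ : 0 < A₁) (hA₂ : 0 < A₂)
    (S : ((Fin n → ℝ) → ℝ) → (Fin n → ℝ) → ℝ)
    (hsub : ∀ f g : (Fin n → ℝ) → ℝ, ∀ x, |S (f + g) x| ≤ |S f x| + |S g x|)
    (hLp : ∀ f : (Fin n → ℝ) → ℝ,
      eLpNorm (S f) (ENNReal.ofReal p₀) volume
        ≤ ENNReal.ofReal A₁ * eLpNorm f (ENNReal.ofReal p₀) volume)
    (hweak : ∀ (f : (Fin n → ℝ) → ℝ) (lam : ℝ), 0 < lam →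
      volume {x | lam < |S f x|}
        ≤ ENNReal.ofReal A₂ *
          ∫⁻ x, ENNReal.ofReal
            ((|f x| / lam) * (Real.log (Real.exp 1 + |f x| / lam)) ^ ϱ)) :
    ∃ C : ℝ, 0 < C ∧
      ∀ (f : (Fin n → ℝ) → ℝ) (z₁ z₂ : Fin n → ℝ) (r₁ r₂ : ℝ), 0 < r₁ → 0 < r₂ →
        ∫⁻ x in Metric.closedBall z₁ r₁,
            ENNReal.ofReal
              (|S ((Metric.closedBall z₂ r₂).indicator f) x| *
                (Real.log (Real.exp 1
                  + |S ((Metric.closedBall z₂ r₂).indicator f) x|)) ^ β)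
          ≤ ENNReal.ofReal C *
            (volume (Metric.closedBall z₁ r₁)
              + ENNReal.ofReal (A₁ ^ p₀ + A₂) *
                ∫⁻ x in Metric.closedBall z₂ r₂,
                  ENNReal.ofReal
                    (|f x| * (Real.log (Real.exp 1 + |f x|)) ^ (β + ϱ + 1))) := by
  obtain ⟨K, hK0, hK⟩ := LlogL.exists_sum_dyadic_le hβ hϱ hp₀
  refine ⟨LlogL.phiLog β 1 + K, add_pos_of_pos_of_nonneg (LlogL.phiLog_pos one_pos) hK0,
    fun f z₁ z₂ r₁ r₂ _ _ => ?_⟩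
  have key := LlogL.setLIntegral_phiLog_le (by linarith) hβ hA₁.le hA₂.le hsub hLp hweak hK0
    (hK A₁ A₂ hA₁.le hA₂.le) ((Metric.closedBall z₂ r₂).indicator f) (Metric.closedBall z₁ r₁)
  rwa [LlogL.lintegral_phiLog_abs_indicator measurableSet_closedBall] at key
end

section
/- Let M be the Hardy–Littlewood maximal operator and δ ∈ (0,1). Then for every locally integrable f and every x ∈ ℝⁿ, M_δ(Mf)(x) ≤ C(n,δ) Mf(x), where M_δ g = (M(|g|^δ))^{1/δ}. -/
/-!
Fix a cube `Q ∋ x` and split `g = g 𝟙_{2Q} + g 𝟙_{(2Q)ᶜ}`. A cube through a point of `Q` that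
meets `(2Q)ᶜ` is so large that its fivefold enlargement contains `x`, so the far part has maximal
function `≤ 5ⁿ Mg(x)` on `Q`. The near part has integral `|2Q| ⨍_{2Q} g ≤ |2Q| Mg(x)`, and the weak
type (1,1) bound combined with Kolmogorov's inequality (here `δ < 1` is needed) gives
`∫_Q (M(g 𝟙_{2Q}))^δ ≲ |Q| Mg(x)^δ`. As `t ↦ t^δ` is subadditive, `⨍_Q (Mg)^δ ≲ Mg(x)^δ`.
-/

open MeasureTheory Set
open scoped ENNReal

/-- The (uncentered, over cubes) maximal operator for an `ℝ≥0∞`-valued function: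
`M g(x) = sup_{Q ∋ x} |Q|⁻¹ ∫_Q g`, where cubes are closed sup-metric balls. -/
noncomputable def cubeMax (n : ℕ) (g : (Fin n → ℝ) → ℝ≥0∞) (x : Fin n → ℝ) : ℝ≥0∞ :=
  ⨆ (z : Fin n → ℝ) (r : ℝ) (_ : 0 < r) (_ : x ∈ Metric.closedBall z r),
    (volume (Metric.closedBall z r))⁻¹ * ∫⁻ y in Metric.closedBall z r, g y

open Metric Filter Topology

section Kolmogorov

theorem ENNReal.rpow_le_add_tsum_dyadic {a : ℝ≥0∞} (ha0 : a ≠ 0) (ha : a ≠ ⊤) {δ : ℝ}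
    (hδ : 0 < δ) (v : ℝ≥0∞) :
    v ^ δ ≤ a ^ δ + ∑' k : ℕ, if 2 ^ k * a < v then (2 ^ (k + 1) * a) ^ δ else 0 := by
  rcases le_or_gt v a with hva | hav
  · exact le_add_right (ENNReal.rpow_le_rpow hva hδ.le)
  refine le_add_left ?_
  rcases eq_or_ne v ⊤ with rfl | hv
  · have hterm : ∀ k : ℕ, a ^ δ ≤ if 2 ^ k * a < ⊤ then (2 ^ (k + 1) * a) ^ δ else 0 := by
      intro k
      rw [if_pos (ENNReal.mul_lt_top (by simp) ha.lt_top)]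
      exact ENNReal.rpow_le_rpow (le_mul_of_one_le_left' (one_le_pow₀ one_le_two)) hδ.le
    rw [ENNReal.top_rpow_of_pos hδ]
    exact (ENNReal.tsum_const_eq_top_of_ne_zero (α := ℕ)
      (ENNReal.rpow_pos (pos_iff_ne_zero.2 ha0) ha).ne').symm.le.trans (ENNReal.tsum_le_tsum hterm)
  have hex : ∃ k : ℕ, v ≤ 2 ^ (k + 1) * a := by
    obtain ⟨m, hm⟩ := ENNReal.exists_nat_mul_gt ha0 hv
    refine ⟨m, hm.le.trans (mul_le_mul_left ?_ a)⟩
    exact_mod_cast Nat.lt_two_pow_self.le.trans (Nat.pow_le_pow_right two_pos m.le_succ)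
  have hlow : 2 ^ Nat.find hex * a < v := by
    rcases h : Nat.find hex with _ | k
    · simpa using hav
    · exact not_le.1 (Nat.find_min hex (h ▸ k.lt_succ_self))
  calc v ^ δ ≤ (2 ^ (Nat.find hex + 1) * a) ^ δ :=
        ENNReal.rpow_le_rpow (Nat.find_spec hex) hδ.le
    _ = if 2 ^ Nat.find hex * a < v then (2 ^ (Nat.find hex + 1) * a) ^ δ else 0 := by
      rw [if_pos hlow]
    _ ≤ _ := ENNReal.le_tsum (Nat.find hex)

theorem ENNReal.two_pow_succ_rpow_div_two_pow (δ : ℝ) (k : ℕ) :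
    ((2 : ℝ≥0∞) ^ (k + 1)) ^ δ / 2 ^ k = 2 ^ δ * (2 ^ δ / 2) ^ k := by
  rw [← ENNReal.rpow_natCast_mul, mul_comm, ENNReal.rpow_mul_natCast, pow_succ', div_eq_mul_inv,
    div_eq_mul_inv, mul_pow, ENNReal.inv_pow, mul_assoc]

variable {α : Type*} [MeasurableSpace α] {μ : Measure α}

theorem ae_eq_zero_of_meas_lt_eq_zero {F : α → ℝ≥0∞} (h : ∀ t ≠ 0, μ {x | t < F x} = 0) :
    ∀ᵐ x ∂μ, F x = 0 := by
  rw [ae_iff]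
  refine measure_mono_null (fun x hx => ?_) (measure_iUnion_null fun k : ℕ =>
    h (k : ℝ≥0∞)⁻¹ (ENNReal.inv_ne_zero.2 (ENNReal.natCast_ne_top k)))
  obtain ⟨k, hk⟩ := ENNReal.exists_inv_nat_lt hx
  exact mem_iUnion.2 ⟨k, hk⟩

/-- Kolmogorov's inequality. Over the dyadic layers `2 ^ k * a < F ≤ 2 ^ (k + 1) * a` the weak
type bound produces a geometric series of ratio `2 ^ δ / 2`, which is `< 1` when `δ < 1`. -/
theorem setLIntegral_rpow_le_of_meas_lt_le {F : α → ℝ≥0∞} (hF : Measurable F) {δ : ℝ}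
    (hδ : 0 < δ) {a B : ℝ≥0∞} (ha : a ≠ ⊤) (hweak : ∀ t ≠ 0, μ {x | t < F x} ≤ a * B / t)
    (s : Set α) :
    ∫⁻ x in s, F x ^ δ ∂μ ≤ a ^ δ * (μ s + 2 ^ δ * (1 - 2 ^ δ / 2)⁻¹ * B) := by
  rcases eq_or_ne a 0 with rfl | ha0
  · have hF0 := ae_eq_zero_of_meas_lt_eq_zero fun t ht => by simpa using hweak t ht
    rw [lintegral_congr_ae ((ae_restrict_of_ae hF0).mono fun x hx => by
      rw [hx, ENNReal.zero_rpow_of_pos hδ])]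
    simp
  set E : ℕ → Set α := fun k => {x | 2 ^ k * a < F x}
  have hE : ∀ k, μ (E k) ≤ B / 2 ^ k := fun k => by
    calc μ (E k) ≤ a * B / (2 ^ k * a) := hweak _ (mul_ne_zero (by simp) ha0)
      _ = B / 2 ^ k := by rw [mul_comm _ a, ENNReal.mul_div_mul_left _ _ ha0 ha]
  have hpt : ∀ x, F x ^ δ ≤ a ^ δ + ∑' k, (E k).indicator (fun _ => (2 ^ (k + 1) * a) ^ δ) x :=
    fun x => by simpa [E, indicator_apply] using ENNReal.rpow_le_add_tsum_dyadic ha0 ha hδ (F x)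
  calc ∫⁻ x in s, F x ^ δ ∂μ
      ≤ ∫⁻ x in s, (a ^ δ + ∑' k, (E k).indicator (fun _ => (2 ^ (k + 1) * a) ^ δ) x) ∂μ :=
        lintegral_mono hpt
    _ = a ^ δ * μ s + ∑' k, ∫⁻ x in s, (E k).indicator (fun _ => (2 ^ (k + 1) * a) ^ δ) x ∂μ := by
      rw [lintegral_add_left measurable_const, lintegral_tsum fun k =>
          (measurable_const.indicator (measurableSet_lt measurable_const hF)).aemeasurable,
        lintegral_const, Measure.restrict_apply_univ]
    _ ≤ a ^ δ * μ s + ∑' k : ℕ, (2 ^ (k + 1) * a) ^ δ * (B / 2 ^ k) := by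
      gcongr with k
      exact (lintegral_indicator_const_le _ _).trans
        (mul_le_mul_right ((Measure.restrict_apply_le _ _).trans (hE k)) _)
    _ = a ^ δ * (μ s + 2 ^ δ * (1 - 2 ^ δ / 2)⁻¹ * B) := by
      have hterm : ∀ k : ℕ, (2 ^ (k + 1) * a) ^ δ * (B / 2 ^ k)
          = a ^ δ * B * (2 ^ δ * (2 ^ δ / 2) ^ k) := fun k => by
        rw [← ENNReal.two_pow_succ_rpow_div_two_pow, ENNReal.mul_rpow_of_nonneg _ _ hδ.le,
          div_eq_mul_inv, div_eq_mul_inv]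
        ring
      simp_rw [hterm]
      rw [ENNReal.tsum_mul_left, ENNReal.tsum_mul_left, ENNReal.tsum_geometric]
      ring

end Kolmogorov

section CubeMax

variable {n : ℕ}

theorem volume_closedBall_fin (z : Fin n → ℝ) {r : ℝ} (hr : 0 ≤ r) :
    volume (closedBall z r) = ENNReal.ofReal (2 * r) ^ n := by
  rw [Real.volume_pi_closedBall z hr, Fintype.card_fin, ENNReal.ofReal_pow (by positivity)]

theorem volume_closedBall_fin_ne_zero (z : Fin n → ℝ) {r : ℝ} (hr : 0 < r) :
    volume (closedBall z r) ≠ 0 := by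
  simp [volume_closedBall_fin z hr.le, hr]

theorem volume_closedBall_fin_mul (z : Fin n → ℝ) {k r : ℝ} (hk : 0 ≤ k) (hr : 0 ≤ r) :
    volume (closedBall z (k * r)) = ENNReal.ofReal k ^ n * volume (closedBall z r) := by
  rw [volume_closedBall_fin z (mul_nonneg hk hr), volume_closedBall_fin z hr, ← mul_pow,
    ← ENNReal.ofReal_mul hk]
  ring_nf

theorem le_cubeMax (g : (Fin n → ℝ) → ℝ≥0∞) {z x : Fin n → ℝ} {r : ℝ} (hr : 0 < r)
    (hx : x ∈ closedBall z r) :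
    (volume (closedBall z r))⁻¹ * ∫⁻ y in closedBall z r, g y ≤ cubeMax n g x :=
  le_iSup_of_le z <| le_iSup_of_le r <| le_iSup_of_le hr <| le_iSup_of_le hx le_rfl

theorem exists_lt_average_of_lt_cubeMax {g : (Fin n → ℝ) → ℝ≥0∞} {x : Fin n → ℝ} {c : ℝ≥0∞}
    (hc : c < cubeMax n g x) :
    ∃ z r, 0 < r ∧ x ∈ closedBall z r ∧
      c < (volume (closedBall z r))⁻¹ * ∫⁻ y in closedBall z r, g y := by
  simpa only [cubeMax, lt_iSup_iff, exists_prop] using hc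

theorem lowerSemicontinuous_cubeMax (g : (Fin n → ℝ) → ℝ≥0∞) :
    LowerSemicontinuous (cubeMax n g) := by
  intro x c hc
  obtain ⟨z, r, hr, hx, hc⟩ := exists_lt_average_of_lt_cubeMax hc
  set I := ∫⁻ y in closedBall z r, g y
  -- Enlarging the ball slightly keeps the average above `c` and puts `x` in its interior.
  have hlim : Tendsto (fun ε => (volume (closedBall z (r + ε)))⁻¹ * I) (𝓝[>] 0)
      (𝓝 ((volume (closedBall z r))⁻¹ * I)) := by
    refine ENNReal.Tendsto.mul_const ?_
      (Or.inl (ENNReal.inv_ne_zero.2 measure_closedBall_lt_top.ne))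
    have hcont : Continuous fun ε : ℝ => (ENNReal.ofReal (2 * (r + ε)) ^ n)⁻¹ :=
      ((ENNReal.continuous_pow n).comp (ENNReal.continuous_ofReal.comp (by fun_prop))).inv
    rw [volume_closedBall_fin z hr.le]
    refine ((hcont.tendsto 0).mono_left nhdsWithin_le_nhds).congr' ?_ |>.trans (by simp)
    filter_upwards [self_mem_nhdsWithin] with ε hε
    rw [volume_closedBall_fin z (by linarith [mem_Ioi.1 hε])]
  obtain ⟨ε, hcε, hε⟩ := ((hlim.eventually (lt_mem_nhds hc)).and self_mem_nhdsWithin).exists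
  filter_upwards [ball_mem_nhds x hε] with y hy
  have hyz : y ∈ closedBall z (r + ε) := by
    rw [mem_closedBall] at hx ⊢
    linarith [dist_triangle y x z, mem_ball.1 hy]
  calc c < (volume (closedBall z (r + ε)))⁻¹ * I := hcε
    _ ≤ (volume (closedBall z (r + ε)))⁻¹ * ∫⁻ y in closedBall z (r + ε), g y := by
      gcongr
      exact lintegral_mono_set (closedBall_subset_closedBall (by linarith))
    _ ≤ cubeMax n g y := le_cubeMax g (by linarith) hyz

theorem measurable_cubeMax (g : (Fin n → ℝ) → ℝ≥0∞) : Measurable (cubeMax n g) :=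
  (lowerSemicontinuous_cubeMax g).measurable

theorem cubeMax_le {g : (Fin n → ℝ) → ℝ≥0∞} {x : Fin n → ℝ} {c : ℝ≥0∞}
    (h : ∀ z r, 0 < r → x ∈ closedBall z r →
      (volume (closedBall z r))⁻¹ * ∫⁻ y in closedBall z r, g y ≤ c) :
    cubeMax n g x ≤ c :=
  iSup_le fun z => iSup_le fun r => iSup_le fun hr => iSup_le (h z r hr)

theorem cubeMax_add_le {f : (Fin n → ℝ) → ℝ≥0∞} (hf : AEMeasurable f volume)
    (g : (Fin n → ℝ) → ℝ≥0∞) (x : Fin n → ℝ) :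
    cubeMax n (f + g) x ≤ cubeMax n f x + cubeMax n g x :=
  cubeMax_le fun z r hr hx => by
    simp only [Pi.add_apply, lintegral_add_left' hf.restrict, mul_add]
    exact add_le_add (le_cubeMax f hr hx) (le_cubeMax g hr hx)

/-- A ball through a point of `closedBall z r` that leaves `closedBall z (2 * r)` is so large
that its fivefold enlargement contains every point of `closedBall z r`. -/
theorem cubeMax_indicator_compl_le (g : (Fin n → ℝ) → ℝ≥0∞) {z x y : Fin n → ℝ} {r : ℝ}
    (hx : x ∈ closedBall z r) (hy : y ∈ closedBall z r) :
    cubeMax n ((closedBall z (2 * r))ᶜ.indicator g) y ≤ 5 ^ n * cubeMax n g x := by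
  refine cubeMax_le fun w s hs hyw => ?_
  rw [mem_closedBall] at hx hy hyw
  by_cases hxw : x ∈ closedBall w (5 * s)
  · have hvol : volume (closedBall w (5 * s)) = 5 ^ n * volume (closedBall w s) := by
      rw [volume_closedBall_fin_mul w (by norm_num) hs.le, ENNReal.ofReal_ofNat]
    calc (volume (closedBall w s))⁻¹ * ∫⁻ v in closedBall w s, (closedBall z (2 * r))ᶜ.indicator g v
        ≤ (volume (closedBall w s))⁻¹ * ∫⁻ v in closedBall w (5 * s), g v := by
          refine mul_le_mul_right ((lintegral_mono (indicator_le_self _ g)).trans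
            (lintegral_mono_set (closedBall_subset_closedBall (by linarith : s ≤ 5 * s)))) _
      _ = 5 ^ n * ((volume (closedBall w (5 * s)))⁻¹ * ∫⁻ v in closedBall w (5 * s), g v) := by
          rw [hvol, ENNReal.mul_inv (by simp) (by simp), ← mul_assoc, ← mul_assoc,
            ENNReal.mul_inv_cancel (by simp) (by simp), one_mul]
      _ ≤ 5 ^ n * cubeMax n g x := by gcongr; exact le_cubeMax g (by linarith) hxw
  · rw [mem_closedBall, not_le] at hxw
    have hsub : closedBall w s ⊆ closedBall z (2 * r) := fun v hv => by
      rw [mem_closedBall] at hv ⊢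
      linarith [dist_triangle4 x z y w, dist_triangle4 v w y z, dist_comm y z, dist_comm w y]
    rw [setLIntegral_congr_fun measurableSet_closedBall fun v hv =>
      indicator_of_notMem (notMem_compl_iff.2 (hsub hv)) g]
    simp

theorem exists_closedBall_volume_le_of_lt_cubeMax {g : (Fin n → ℝ) → ℝ≥0∞} {x : Fin n → ℝ}
    {t : ℝ≥0∞} (ht : t ≠ 0) (htop : t ≠ ⊤) (hx : t < cubeMax n g x) :
    ∃ z r, 0 < r ∧ x ∈ closedBall z r ∧
      volume (closedBall z r) ≤ (∫⁻ y in closedBall z r, g y) / t := by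
  obtain ⟨z, r, hr, hxz, hlt⟩ := exists_lt_average_of_lt_cubeMax hx
  refine ⟨z, r, hr, hxz, (ENNReal.le_div_iff_mul_le (Or.inl ht) (Or.inl htop)).2 ?_⟩
  calc volume (closedBall z r) * t
      ≤ volume (closedBall z r) * ((volume (closedBall z r))⁻¹ * ∫⁻ y in closedBall z r, g y) := by
        gcongr
    _ = ∫⁻ y in closedBall z r, g y := by
      rw [← mul_assoc, ENNReal.mul_inv_cancel (volume_closedBall_fin_ne_zero z hr)
        measure_closedBall_lt_top.ne, one_mul]

theorem le_max_of_volume_closedBall_le (hn : n ≠ 0) (z : Fin n → ℝ) {r : ℝ} {V : ℝ≥0∞}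
    (hr : 0 ≤ r) (hV : V ≠ ⊤) (h : volume (closedBall z r) ≤ V) : r ≤ max 1 V.toReal := by
  rw [volume_closedBall_fin z hr, ← ENNReal.ofReal_pow (by positivity)] at h
  have hpow : (2 * r) ^ n ≤ V.toReal := by
    simpa [ENNReal.toReal_ofReal (by positivity : (0 : ℝ) ≤ (2 * r) ^ n)] using
      ENNReal.toReal_mono hV h
  rcases le_or_gt (2 * r) 1 with h1 | h1
  · exact le_max_of_le_left (by linarith)
  · exact le_max_of_le_right (by linarith [le_self_pow₀ h1.le hn])

theorem volume_lt_cubeMax_le (g : (Fin n → ℝ) → ℝ≥0∞) {t : ℝ≥0∞} (ht : t ≠ 0) :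
    volume {y | t < cubeMax n g y} ≤ 5 ^ n * (∫⁻ y, g y) / t := by
  set S := {y | t < cubeMax n g y}
  set T := ∫⁻ y, g y
  rcases eq_or_ne t ⊤ with rfl | htop
  · simp [S]
  choose ctr rad hrad hmem hvol using fun y : S =>
    exists_closedBall_volume_le_of_lt_cubeMax ht htop y.2
  have hvolT : ∀ y, volume (closedBall (ctr y) (rad y)) ≤ T / t := fun y =>
    (hvol y).trans (by gcongr; exact setLIntegral_le_lintegral _ _)
  rcases eq_or_ne n 0 with rfl | hn
  -- In dimension zero the radii are unbounded, as every ball has volume 1, but every ball is the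
  -- whole space.
  · rcases S.eq_empty_or_nonempty with hS | ⟨y, hy⟩
    · simp [hS]
    have hSB : S ⊆ closedBall (ctr ⟨y, hy⟩) (rad ⟨y, hy⟩) := fun w _ =>
      Subsingleton.elim y w ▸ hmem ⟨y, hy⟩
    simpa using (measure_mono hSB).trans (hvolT ⟨y, hy⟩)
  rcases eq_or_ne T ⊤ with hT | hT
  · simp [hT, ENNReal.top_div, htop]
  obtain ⟨u, -, hdisj, hcover⟩ := Vitali.exists_disjoint_subfamily_covering_enlargement_closedBall
    univ ctr rad _ (fun y _ => le_max_of_volume_closedBall_le hn _ (hrad y).le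
      (ENNReal.div_ne_top hT ht) (hvolT y)) 5 (by norm_num)
  have hu : u.Countable := hdisj.countable_of_nonempty_interior fun y _ =>
    (nonempty_ball.2 (hrad y)).mono ball_subset_interior_closedBall
  have hSu : S ⊆ ⋃ b ∈ u, closedBall (ctr b) (5 * rad b) := fun y hy => by
    obtain ⟨b, hb, hsub⟩ := hcover ⟨y, hy⟩ (mem_univ _)
    exact mem_biUnion hb (hsub (hmem ⟨y, hy⟩))
  calc volume S ≤ ∑' b : u, volume (closedBall (ctr b) (5 * rad b)) :=
        (measure_mono hSu).trans (measure_biUnion_le _ hu _)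
    _ ≤ ∑' b : u, 5 ^ n * ((∫⁻ y in closedBall (ctr b) (rad b), g y) * t⁻¹) := by
      gcongr with b
      rw [volume_closedBall_fin_mul _ (by norm_num) (hrad b).le, ENNReal.ofReal_ofNat,
        ← div_eq_mul_inv]
      gcongr
      exact hvol b
    _ = 5 ^ n * (∫⁻ y in ⋃ b ∈ u, closedBall (ctr b) (rad b), g y) / t := by
      rw [lintegral_biUnion hu (fun b _ => measurableSet_closedBall) hdisj, ENNReal.tsum_mul_left,
        ENNReal.tsum_mul_right, mul_div_assoc, div_eq_mul_inv]
    _ ≤ 5 ^ n * T / t := by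
      gcongr
      exact setLIntegral_le_lintegral _ _

/-- `1 + 2 ^ δ * (1 - 2 ^ δ / 2)⁻¹ * 10 ^ n` bounds the part of `g` near the cube (Kolmogorov's
inequality with the weak type constant `5 ^ n`, on the doubled cube of volume `2 ^ n` times
larger), and `(5 ^ n) ^ δ` the part far from it. -/
noncomputable def coifmanRochbergConst (n : ℕ) (δ : ℝ) : ℝ≥0∞ :=
  1 + 2 ^ δ * (1 - 2 ^ δ / 2)⁻¹ * 10 ^ n + (5 ^ n) ^ δ

theorem coifmanRochbergConst_ne_top (n : ℕ) {δ : ℝ} (hδ0 : 0 < δ) (hδ1 : δ < 1) :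
    coifmanRochbergConst n δ ≠ ⊤ := by
  have hq : (2 : ℝ≥0∞) ^ δ / 2 < 1 := by
    rw [ENNReal.div_lt_iff (by simp) (by simp), one_mul]
    simpa using ENNReal.rpow_lt_rpow_of_exponent_lt (x := 2) (by norm_num) (by simp) hδ1
  have h2 : (2 : ℝ≥0∞) ^ δ ≠ ⊤ := ENNReal.rpow_ne_top_of_nonneg hδ0.le (by simp)
  have h5 : ((5 : ℝ≥0∞) ^ n) ^ δ ≠ ⊤ := ENNReal.rpow_ne_top_of_nonneg hδ0.le (by simp)
  simp [coifmanRochbergConst, h2, h5, ENNReal.mul_eq_top, (tsub_pos_of_lt hq).ne']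

theorem cubeMax_rpow_le_indicator_add_compl {g : (Fin n → ℝ) → ℝ≥0∞}
    (hg : AEMeasurable g volume) {s : Set (Fin n → ℝ)} (hs : MeasurableSet s) {δ : ℝ}
    (hδ0 : 0 < δ) (hδ1 : δ ≤ 1) (y : Fin n → ℝ) :
    cubeMax n g y ^ δ ≤ cubeMax n (s.indicator g) y ^ δ + cubeMax n (sᶜ.indicator g) y ^ δ :=
  calc cubeMax n g y ^ δ = cubeMax n (s.indicator g + sᶜ.indicator g) y ^ δ := by
        rw [indicator_self_add_compl]
    _ ≤ (cubeMax n (s.indicator g) y + cubeMax n (sᶜ.indicator g) y) ^ δ :=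
        ENNReal.rpow_le_rpow (cubeMax_add_le (hg.indicator hs) _ _) hδ0.le
    _ ≤ _ := ENNReal.rpow_add_le_add_rpow _ _ hδ0.le hδ1

theorem setLIntegral_cubeMax_indicator_rpow_le (g : (Fin n → ℝ) → ℝ≥0∞)
    {s : Set (Fin n → ℝ)} (hs : MeasurableSet s) (hs0 : volume s ≠ 0) (hs' : volume s ≠ ⊤)
    (ha : (volume s)⁻¹ * ∫⁻ y in s, g y ≠ ⊤) {δ : ℝ} (hδ : 0 < δ) (Q : Set (Fin n → ℝ)) :
    ∫⁻ y in Q, cubeMax n (s.indicator g) y ^ δ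
      ≤ ((volume s)⁻¹ * ∫⁻ y in s, g y) ^ δ
        * (volume Q + 2 ^ δ * (1 - 2 ^ δ / 2)⁻¹ * (5 ^ n * volume s)) := by
  refine setLIntegral_rpow_le_of_meas_lt_le (measurable_cubeMax _) hδ ha (fun t ht => ?_) Q
  calc volume {y | t < cubeMax n (s.indicator g) y} ≤ 5 ^ n * (∫⁻ y, s.indicator g y) / t :=
        volume_lt_cubeMax_le _ ht
    _ = (volume s)⁻¹ * (∫⁻ y in s, g y) * (5 ^ n * volume s) / t := by
        rw [lintegral_indicator hs, mul_right_comm _ _ (5 ^ n * _), mul_comm _ (5 ^ n * _),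
          mul_assoc (5 ^ n), ENNReal.mul_inv_cancel hs0 hs', mul_one, mul_comm]

theorem setLIntegral_cubeMax_rpow_le {g : (Fin n → ℝ) → ℝ≥0∞} (hg : AEMeasurable g volume)
    {δ : ℝ} (hδ0 : 0 < δ) (hδ1 : δ ≤ 1) {z x : Fin n → ℝ} {r : ℝ} (hr : 0 < r)
    (hx : x ∈ closedBall z r) :
    ∫⁻ y in closedBall z r, cubeMax n g y ^ δ
      ≤ coifmanRochbergConst n δ * cubeMax n g x ^ δ * volume (closedBall z r) := by
  set Q := closedBall z r
  set Q₂ := closedBall z (2 * r)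
  set M := cubeMax n g x
  rcases eq_or_ne M ⊤ with hM | hM
  · simp [hM, ENNReal.top_rpow_of_pos hδ0, coifmanRochbergConst, Q,
      volume_closedBall_fin_ne_zero z hr]
  have hQ₂0 : volume Q₂ ≠ 0 := volume_closedBall_fin_ne_zero z (by positivity)
  have hQ₂ : volume Q₂ = 2 ^ n * volume Q := by
    rw [volume_closedBall_fin_mul z (by norm_num) hr.le, ENNReal.ofReal_ofNat]
  have haM : (volume Q₂)⁻¹ * ∫⁻ y in Q₂, g y ≤ M :=
    le_cubeMax g (by positivity) (closedBall_subset_closedBall (by linarith) hx)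
  have hnear := setLIntegral_cubeMax_indicator_rpow_le g measurableSet_closedBall hQ₂0
    measure_closedBall_lt_top.ne (ne_top_of_le_ne_top hM haM) hδ0 Q
  have hfar : ∫⁻ y in Q, cubeMax n (Q₂ᶜ.indicator g) y ^ δ ≤ (5 ^ n * M) ^ δ * volume Q :=
    (setLIntegral_mono measurable_const fun y hy => ENNReal.rpow_le_rpow
      (cubeMax_indicator_compl_le g hx hy) hδ0.le).trans_eq (setLIntegral_const _ _)
  calc ∫⁻ y in Q, cubeMax n g y ^ δ
      ≤ ∫⁻ y in Q, (cubeMax n (Q₂.indicator g) y ^ δ + cubeMax n (Q₂ᶜ.indicator g) y ^ δ) :=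
        lintegral_mono (cubeMax_rpow_le_indicator_add_compl hg measurableSet_closedBall hδ0 hδ1)
    _ = (∫⁻ y in Q, cubeMax n (Q₂.indicator g) y ^ δ)
          + ∫⁻ y in Q, cubeMax n (Q₂ᶜ.indicator g) y ^ δ :=
        lintegral_add_left ((measurable_cubeMax _).pow_const δ) _
    _ ≤ M ^ δ * (volume Q + 2 ^ δ * (1 - 2 ^ δ / 2)⁻¹ * (5 ^ n * (2 ^ n * volume Q)))
          + (5 ^ n * M) ^ δ * volume Q := by
        rw [← hQ₂]
        gcongr
        exact hnear.trans (by gcongr)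
    _ = coifmanRochbergConst n δ * M ^ δ * volume Q := by
        rw [coifmanRochbergConst, ENNReal.mul_rpow_of_nonneg _ _ hδ0.le,
          show (10 : ℝ≥0∞) ^ n = 5 ^ n * 2 ^ n by rw [← mul_pow]; norm_num]
        ring

theorem cubeMax_rpow_cubeMax_le {g : (Fin n → ℝ) → ℝ≥0∞} (hg : AEMeasurable g volume)
    {δ : ℝ} (hδ0 : 0 < δ) (hδ1 : δ ≤ 1) (x : Fin n → ℝ) :
    cubeMax n (fun y => cubeMax n g y ^ δ) x ≤ coifmanRochbergConst n δ * cubeMax n g x ^ δ :=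
  cubeMax_le fun z r hr hx =>
    calc (volume (closedBall z r))⁻¹ * ∫⁻ y in closedBall z r, cubeMax n g y ^ δ
        ≤ (volume (closedBall z r))⁻¹ *
          (coifmanRochbergConst n δ * cubeMax n g x ^ δ * volume (closedBall z r)) :=
          mul_le_mul_right (setLIntegral_cubeMax_rpow_le hg hδ0 hδ1 hr hx) _
      _ = coifmanRochbergConst n δ * cubeMax n g x ^ δ := by
          rw [mul_comm, mul_assoc, ENNReal.mul_inv_cancel (volume_closedBall_fin_ne_zero z hr)
            measure_closedBall_lt_top.ne, mul_one]

end CubeMax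

/-- Coifman–Rochberg: for `δ ∈ (0,1)`,
`M_δ(Mf)(x) = (M((Mf)^δ))^{1/δ}(x) ≤ C(n,δ) Mf(x)` pointwise. -/
theorem stmt_14 (n : ℕ) (δ : ℝ) (hδ : δ ∈ Set.Ioo (0 : ℝ) 1) :
    ∃ C : ℝ, 0 < C ∧
      ∀ f : (Fin n → ℝ) → ℝ, LocallyIntegrable f volume →
      ∀ x : Fin n → ℝ,
        (cubeMax n
            (fun y => (cubeMax n (fun w => ENNReal.ofReal |f w|) y) ^ δ) x) ^ (1 / δ)
          ≤ ENNReal.ofReal C * cubeMax n (fun w => ENNReal.ofReal |f w|) x := by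
  obtain ⟨hδ0, hδ1⟩ := hδ
  set K := coifmanRochbergConst n δ ^ (1 / δ)
  have hK : K ≠ ⊤ :=
    ENNReal.rpow_ne_top_of_nonneg (by positivity) (coifmanRochbergConst_ne_top n hδ0 hδ1)
  have hK0 : K ≠ 0 := by simp [K, coifmanRochbergConst, ENNReal.rpow_eq_zero_iff, hδ0, hδ0.le]
  refine ⟨K.toReal, ENNReal.toReal_pos hK0 hK, fun f hf x => ?_⟩
  set g : (Fin n → ℝ) → ℝ≥0∞ := fun w => ENNReal.ofReal |f w|
  have hg : AEMeasurable g volume := hf.aestronglyMeasurable.aemeasurable.abs.ennreal_ofReal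
  calc cubeMax n (fun y => cubeMax n g y ^ δ) x ^ (1 / δ)
      ≤ (coifmanRochbergConst n δ * cubeMax n g x ^ δ) ^ (1 / δ) :=
        ENNReal.rpow_le_rpow (cubeMax_rpow_cubeMax_le hg hδ0 hδ1.le x) (by positivity)
    _ = ENNReal.ofReal K.toReal * cubeMax n g x := by
        rw [ENNReal.ofReal_toReal hK, ENNReal.mul_rpow_of_nonneg _ _ (by positivity),
          ← ENNReal.rpow_mul, mul_one_div_cancel hδ0.ne', ENNReal.rpow_one]
end
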